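/- arXiv:2502.18593 — 4 statements merged into one kernel-verified Lean document; each statement's English description precedes it below -/
import Mathlib

section
/- For an even integer k ≥ 4 and any z in the upper half plane, Σ_{n∈ℤ} 1/(z+n)^k = ((−2πi)^k / Γ(k)) · Σ_{m≥1} m^{k−1} e^{2πimz}, with both sides absolutely convergent. -/
open Complex Real MeasureTheory Set Filter Asymptotics Topology

noncomputable section

lemma lf_norm_aux (n : ℕ) (a : ℂ) {t : ℝ} (ht : 0 ≤ t) :
    ‖(t : ℂ) ^ n * Complex.exp (-a * t)‖ = t ^ n * Real.exp (-a.re * t) := by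
  rw [norm_mul, norm_pow, Complex.norm_real, Real.norm_eq_abs,
    _root_.abs_of_nonneg ht, Complex.norm_exp]
  congr 2
  simp [Complex.mul_re]

lemma lf_tendsto_aux (n : ℕ) {b : ℝ} (hb : 0 < b) :
    Tendsto (fun t : ℝ => t ^ n * Real.exp (-b * t)) atTop (𝓝 0) := by
  have := tendsto_rpow_mul_exp_neg_mul_atTop_nhds_zero n b hb
  refine this.congr' ?_
  filter_upwards [eventually_ge_atTop (0:ℝ)] with t ht
  rw [Real.rpow_natCast]

lemma lf_integrable_aux (n : ℕ) {a : ℂ} (ha : 0 < a.re) :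
    IntegrableOn (fun t : ℝ => (t : ℂ) ^ n * Complex.exp (-a * t)) (Ioi 0) := by
  have hcont : Continuous fun t : ℝ => (t : ℂ) ^ n * Complex.exp (-a * t) := by
    fun_prop
  rw [IntegrableOn, ← integrable_norm_iff hcont.aestronglyMeasurable.restrict]
  apply integrable_of_isBigO_exp_neg (half_pos ha) (hcont.norm.continuousOn)
  apply IsBigO.of_bound 1
  have h2 : ∀ᶠ t : ℝ in atTop, t ^ n * Real.exp (-(a.re/2) * t) ≤ 1 :=
    (lf_tendsto_aux n (half_pos ha)).eventually (ge_mem_nhds one_pos)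
  filter_upwards [eventually_ge_atTop (0:ℝ), h2] with t ht h1t
  rw [norm_norm, lf_norm_aux n a ht, one_mul, Real.norm_eq_abs,
    _root_.abs_of_nonneg (Real.exp_pos _).le]
  have hsplit : -a.re * t = -(a.re/2) * t + -(a.re/2) * t := by ring
  rw [hsplit, Real.exp_add, ← mul_assoc]
  calc t ^ n * Real.exp (-(a.re/2) * t) * Real.exp (-(a.re/2) * t)
      ≤ 1 * Real.exp (-(a.re/2) * t) :=
        mul_le_mul_of_nonneg_right h1t (Real.exp_pos _).le
    _ = Real.exp (-(a.re/2) * t) := one_mul _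

lemma lf_gamma_int (n : ℕ) {a : ℂ} (ha : 0 < a.re) :
    ∫ t in Ioi (0:ℝ), (t : ℂ) ^ n * Complex.exp (-a * t) = (Nat.factorial n : ℂ) / a ^ (n + 1) := by
  have ha0 : a ≠ 0 := fun h => by simp [h] at ha
  induction n with
  | zero =>
    have key : ∫ t in Ioi (0:ℝ), Complex.exp (-a * t) = 0 - (-Complex.exp (-a * 0) / a) := by
      refine integral_Ioi_of_hasDerivAt_of_tendsto (f := fun t : ℝ => -Complex.exp (-a * t) / a) ?_ (fun x _ => ?_) ?_ ?_
      · exact (by fun_prop : Continuous fun t : ℝ => -Complex.exp (-a * t) / a).continuousWithinAt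
      · have h1 : HasDerivAt (fun t : ℝ => -a * (t:ℂ)) (-a) x := by
          simpa using (Complex.ofRealCLM.hasDerivAt (x := x)).const_mul (-a)
        have h2 := h1.cexp
        have := (h2.neg).div_const a
        convert this using 1
        · rfl
        · rfl
        · field_simp
      · simpa using (lf_integrable_aux 0 ha)
      · rw [tendsto_zero_iff_norm_tendsto_zero]
        have : (fun x : ℝ => ‖-Complex.exp (-a * x) / a‖) =ᶠ[atTop]
            fun x => (x ^ 0 * Real.exp (-a.re * x)) / ‖a‖ := by
          filter_upwards [eventually_ge_atTop (0:ℝ)] with t ht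
          rw [norm_div, norm_neg, ← lf_norm_aux 0 a ht]
          simp
        rw [tendsto_congr' this]
        simpa using (lf_tendsto_aux 0 ha).div_const ‖a‖
    simp only [pow_zero, one_mul] at key ⊢
    rw [key]
    simp [Nat.factorial]
    ring
  | succ n ih =>
    -- ∫ G' = -(G 0) = 0 where G t = t^(n+1) exp(-a t)
    have key : ∫ t in Ioi (0:ℝ),
        (((n:ℂ)+1) * ((t:ℂ)^n * Complex.exp (-a*t)) - a * ((t:ℂ)^(n+1) * Complex.exp (-a*t)))
        = 0 - ((0:ℂ)^(n+1) * Complex.exp (-a * 0)) := by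
      refine integral_Ioi_of_hasDerivAt_of_tendsto (f := fun t : ℝ => (t:ℂ)^(n+1) * Complex.exp (-a*t)) ?_ (fun x _ => ?_) ?_ ?_
      · exact (by fun_prop : Continuous fun t : ℝ => (t:ℂ)^(n+1) * Complex.exp (-a*t)).continuousWithinAt
      · have hpow : HasDerivAt (fun t : ℝ => ((t:ℂ))^(n+1)) (((n:ℂ)+1) * (x:ℂ)^n) x := by
          have := (hasDerivAt_pow (n+1) ((x:ℂ))).comp_ofReal
          simpa [Nat.add_sub_cancel, mul_comm] using this
        have hexp : HasDerivAt (fun t : ℝ => Complex.exp (-a * t)) (-a * Complex.exp (-a * x)) x := by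
          have h1 : HasDerivAt (fun t : ℝ => -a * (t:ℂ)) (-a) x := by
            simpa using (Complex.ofRealCLM.hasDerivAt (x := x)).const_mul (-a)
          simpa [mul_comm] using h1.cexp
        have := hpow.mul hexp
        convert this using 1
        · rfl
        · rfl
        · ring
      · apply Integrable.sub
        · exact (lf_integrable_aux n ha).const_mul _
        · exact (lf_integrable_aux (n+1) ha).const_mul _
      · rw [tendsto_zero_iff_norm_tendsto_zero]
        have : (fun x : ℝ => ‖(x:ℂ)^(n+1) * Complex.exp (-a * x)‖) =ᶠ[atTop]
            fun x => x ^ (n+1) * Real.exp (-a.re * x) := by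
          filter_upwards [eventually_ge_atTop (0:ℝ)] with t ht
          exact lf_norm_aux (n+1) a ht
        rw [tendsto_congr' this]
        exact lf_tendsto_aux (n+1) ha
    rw [integral_sub ((lf_integrable_aux n ha).const_mul _) ((lf_integrable_aux (n+1) ha).const_mul _),
      integral_const_mul, integral_const_mul, ih] at key
    have h0 : (0:ℂ)^(n+1) * Complex.exp (-a * 0) = 0 := by simp
    rw [h0] at key
    have hkey : ((n:ℂ)+1) * ((Nat.factorial n : ℂ) / a ^ (n+1)) = a * ∫ t in Ioi (0:ℝ), (t:ℂ)^(n+1) * Complex.exp (-a*t) := sub_eq_zero.mp (by simpa using key)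
    have hfac : ((Nat.factorial (n+1) : ℕ) : ℂ) = ((n:ℂ)+1) * (Nat.factorial n : ℂ) := by
      push_cast [Nat.factorial_succ]; ring
    rw [hfac]
    field_simp at hkey ⊢
    linear_combination -hkey

open FourierTransform

/-- The auxiliary function whose Fourier transform is `c * (z - x)^{-k}`. -/
def lfg (k : ℕ) (z : ℂ) : ℝ → ℂ :=
  fun ξ => ((max ξ 0 : ℝ) : ℂ) ^ (k - 1) * Complex.exp (2 * π * I * ξ * z)

lemma lfg_eq_zero {k : ℕ} (hk : 4 ≤ k) (z : ℂ) {ξ : ℝ} (hξ : ξ ≤ 0) : lfg k z ξ = 0 := by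
  have : max ξ 0 = 0 := max_eq_right hξ
  simp [lfg, this, zero_pow, Nat.sub_ne_zero_of_lt (by omega : 1 < k)]

lemma lfg_continuous (k : ℕ) (z : ℂ) : Continuous (lfg k z) := by
  unfold lfg; fun_prop

lemma lfg_re_pos {z : ℂ} (hz : 0 < z.im) (x : ℝ) : 0 < (2 * π * I * ((x:ℂ) - z)).re := by
  have : (2 * π * I * ((x:ℂ) - z)).re = 2 * π * z.im := by
    simp [Complex.mul_re, Complex.mul_im]
  rw [this]
  positivity

lemma lfg_eq_on_Ioi {k : ℕ} (z : ℂ) {ξ : ℝ} (hξ : 0 < ξ) :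
    lfg k z ξ = (ξ:ℂ) ^ (k-1) * Complex.exp (-(2 * π * I * ((0:ℂ) - z)) * ξ) := by
  rw [lfg, max_eq_left hξ.le]
  congr 2
  ring

lemma lfg_integrable {k : ℕ} (hk : 4 ≤ k) {z : ℂ} (hz : 0 < z.im) :
    Integrable (lfg k z) := by
  have h1 : IntegrableOn (lfg k z) (Ioi 0) := by
    refine (lf_integrable_aux (k-1) (a := 2 * π * I * ((0:ℂ) - z)) ?_).congr_fun ?_ measurableSet_Ioi
    · simpa using lfg_re_pos hz 0
    · intro ξ hξ; exact (lfg_eq_on_Ioi z hξ).symm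
  have h2 : IntegrableOn (lfg k z) (Iic 0) := by
    exact (integrableOn_zero).congr_fun (fun ξ hξ => (lfg_eq_zero hk z hξ).symm) measurableSet_Iic
  have := h2.union h1
  rwa [Iic_union_Ioi, integrableOn_univ] at this

lemma lfg_fourier {k : ℕ} (hk : 4 ≤ k) (hke : Even k) {z : ℂ} (hz : 0 < z.im) (x : ℝ) :
    𝓕 (lfg k z) x = (Nat.factorial (k-1) : ℂ) / (2 * π * I) ^ k * ((z - x) ^ k)⁻¹ := by
  rw [Real.fourier_real_eq_integral_exp_smul]
  have hind : (fun v : ℝ => Complex.exp (↑(-2 * π * v * x) * I) • lfg k z v) =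
      (Ioi (0:ℝ)).indicator (fun v : ℝ => (v:ℂ) ^ (k-1) *
        Complex.exp (-(2 * π * I * ((x:ℂ) - z)) * v)) := by
    funext v
    rcases le_or_gt v 0 with hv | hv
    · rw [Set.indicator_of_notMem (by simpa using hv), lfg_eq_zero hk z hv, smul_zero]
    · rw [Set.indicator_of_mem (show v ∈ Ioi (0:ℝ) from hv), smul_eq_mul, lfg, max_eq_left hv.le, ← mul_assoc,
        mul_comm (Complex.exp _) ((v:ℂ)^(k-1)), mul_assoc, ← Complex.exp_add]
      congr 2
      push_cast
      ring
  rw [hind, integral_indicator measurableSet_Ioi,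
    lf_gamma_int (k-1) (lfg_re_pos hz x)]
  have hk1 : k - 1 + 1 = k := Nat.succ_pred_eq_of_pos (by omega : 0 < k)
  rw [hk1, mul_pow]
  have hzx : ((x:ℂ) - z) ^ k = (z - x) ^ k := by
    have : ((x:ℂ) - z) = -(z - x) := by ring
    rw [this, hke.neg_pow]
  rw [hzx, ← div_div, div_eq_mul_inv]


lemma lf_isBigO {k : ℕ} (hk : 4 ≤ k) {z : ℂ} (hz : 0 < z.im) (c : ℂ) :
    (fun x : ℝ => c * ((z - x) ^ k)⁻¹) =O[cocompact ℝ] (fun x => |x| ^ (-(k:ℝ))) := by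
  have hmain : ∀ x : ℝ, 2 * ‖z‖ + 1 ≤ |x| →
      ‖c * ((z - x)^k)⁻¹‖ ≤ (‖c‖ * 2^k) * ‖|x| ^ (-(k:ℝ))‖ := by
    intro x hx
    have habsz : 0 ≤ ‖z‖ := norm_nonneg _
    have h0 : (0:ℝ) < |x| := by linarith
    have h1 : |x| / 2 ≤ ‖z - x‖ := by
      have h2 : ‖(x:ℂ)‖ - ‖z‖ ≤ ‖(x:ℂ) - z‖ := norm_sub_norm_le _ _
      rw [Complex.norm_real, Real.norm_eq_abs, norm_sub_rev] at h2
      have : ‖z - x‖ = ‖z - (x:ℂ)‖ := rfl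
      rw [this]
      have : ‖z‖ = ‖z‖ := rfl
      linarith [h2, this ▸ hx]
    have h2 : (|x| / 2) ^ k ≤ ‖z - x‖ ^ k :=
      pow_le_pow_left₀ (by positivity) h1 k
    have h3 : ‖((z - (x:ℂ))^k)⁻¹‖ ≤ ((|x| / 2) ^ k)⁻¹ := by
      rw [norm_inv, norm_pow]
      exact inv_anti₀ (by positivity) h2
    have h4 : ‖|x| ^ (-(k:ℝ))‖ = (|x| ^ k)⁻¹ := by
      rw [Real.norm_eq_abs, _root_.abs_of_nonneg (Real.rpow_nonneg (abs_nonneg x) _),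
        Real.rpow_neg (abs_nonneg x), Real.rpow_natCast]
    rw [norm_mul, h4]
    calc ‖c‖ * ‖((z - (x:ℂ))^k)⁻¹‖ ≤ ‖c‖ * ((|x| / 2) ^ k)⁻¹ :=
          mul_le_mul_of_nonneg_left h3 (norm_nonneg c)
      _ = ‖c‖ * 2^k * (|x| ^ k)⁻¹ := by
          rw [div_pow]
          field_simp
  rw [cocompact_eq_atBot_atTop]
  apply IsBigO.of_bound (‖c‖ * 2^k)
  rw [eventually_sup]
  constructor
  · filter_upwards [eventually_le_atBot (-(2 * ‖z‖ + 1))] with x hx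
    refine hmain x ?_
    have : 2 * ‖z‖ + 1 ≤ -x := by linarith
    exact this.trans (neg_le_abs x)
  · filter_upwards [eventually_ge_atTop (2 * ‖z‖ + 1)] with x hx
    exact hmain x (hx.trans (le_abs_self x))

lemma lf_integrableAtFilter {k : ℕ} (hk : 4 ≤ k) :
    IntegrableAtFilter (fun x : ℝ => |x| ^ (-(k:ℝ))) (cocompact ℝ) volume := by
  have hklt : -(k:ℝ) < -1 := by
    have : (1:ℝ) < k := by exact_mod_cast (by omega : 1 < k)
    linarith
  have hTop : IntegrableOn (fun x : ℝ => |x| ^ (-(k:ℝ))) (Ioi 1) := by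
    refine (integrableOn_Ioi_rpow_of_lt hklt one_pos).congr_fun (fun x hx => ?_) measurableSet_Ioi
    rw [abs_of_pos (lt_trans one_pos hx)]
  have hBot : IntegrableOn (fun x : ℝ => |x| ^ (-(k:ℝ))) (Iio (-1)) := by
    rw [← (Measure.measurePreserving_neg (volume : Measure ℝ)).integrableOn_comp_preimage
        (Homeomorph.neg ℝ).measurableEmbedding]
    simp only [Function.comp_def, neg_preimage, neg_Iio, neg_neg]
    refine hTop.congr_fun (fun x hx => ?_) measurableSet_Ioi
    rw [abs_neg]
  rw [cocompact_eq_atBot_atTop]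
  refine IntegrableAtFilter.sup_iff.mpr ⟨⟨Iio (-1), Iio_mem_atBot _, hBot⟩,
    ⟨Ioi 1, Ioi_mem_atTop _, hTop⟩⟩

lemma lfg_norm {k : ℕ} (hk : 4 ≤ k) {z : ℂ} (hz : 0 < z.im) {ξ : ℝ} (hξ : 0 < ξ) :
    ‖lfg k z ξ‖ = ξ ^ (k-1) * Real.exp (-(2 * π * z.im) * ξ) := by
  rw [lfg_eq_on_Ioi z hξ, lf_norm_aux (k-1) _ hξ.le]
  congr 2
  simp [Complex.mul_re, Complex.mul_im]

lemma lf_rpow_abs_norm (k : ℕ) (x : ℝ) : ‖|x| ^ (-(k:ℝ))‖ = (|x| ^ k)⁻¹ := by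
  rw [Real.norm_eq_abs, _root_.abs_of_nonneg (Real.rpow_nonneg (abs_nonneg x) _),
    Real.rpow_neg (abs_nonneg x), Real.rpow_natCast]

/-- Lipschitz summation formula: for even `k ≥ 4` and `z` in the upper half plane,
`Σ_{n∈ℤ} (z+n)^{−k} = ((−2πi)^k/Γ(k)) Σ_{m≥1} m^{k−1} e^{2πimz}`, with both sides
absolutely convergent. -/
theorem lipschitz_formula (k : ℕ) (hk : 4 ≤ k) (hke : Even k) (z : ℂ) (hz : 0 < z.im) :
    Summable (fun n : ℤ => ((z + n) ^ k)⁻¹) ∧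
    Summable (fun m : ℕ => ((m : ℂ) + 1) ^ (k - 1) *
      Complex.exp (2 * π * I * ((m : ℂ) + 1) * z)) ∧
    ∑' n : ℤ, ((z + n) ^ k)⁻¹ =
      ((-(2 * π * I)) ^ k / Complex.Gamma k) *
        ∑' m : ℕ, ((m : ℂ) + 1) ^ (k - 1) * Complex.exp (2 * π * I * ((m : ℂ) + 1) * z) := by
  have hπI : (2 * ↑π * I : ℂ) ≠ 0 := by
    simp [Real.pi_ne_zero, Complex.I_ne_zero]
  set c : ℂ := (Nat.factorial (k-1) : ℂ) / (2 * ↑π * I) ^ k with hc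
  have hc0 : c ≠ 0 := div_ne_zero
    (Nat.cast_ne_zero.mpr (Nat.factorial_ne_zero _)) (pow_ne_zero _ hπI)
  set F : ℝ → ℂ := fun x => c * ((z - x) ^ k)⁻¹ with hFdef
  -- basic nonvanishing
  have hzx : ∀ x : ℝ, (z - (x:ℂ)) ≠ 0 := by
    intro x h
    have := congrArg Complex.im h
    simp at this
    linarith
  have hzxk : ∀ x : ℝ, ((z - (x:ℂ))^k) ≠ 0 := fun x => pow_ne_zero _ (hzx x)
  have hFcont : Continuous F :=
    continuous_const.mul ((Continuous.pow (by fun_prop) k).inv₀ hzxk)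
  have hFg : 𝓕 (lfg k z) = F := funext fun x => lfg_fourier hk hke hz x
  have hFO : F =O[cocompact ℝ] (fun x => |x| ^ (-(k:ℝ))) := lf_isBigO hk hz c
  have hFint : Integrable F :=
    hFcont.locallyIntegrable.integrable_of_isBigO_cocompact hFO (lf_integrableAtFilter hk)
  -- Fourier inversion : 𝓕 F x = lfg k z (-x)
  have hinv : ∀ x : ℝ, 𝓕 F x = lfg k z (-x) := by
    intro x
    have := (lfg_continuous k z).fourierInv_fourier_eq (lfg_integrable hk hz) (hFg ▸ hFint)
    calc 𝓕 F x = 𝓕 (𝓕 (lfg k z)) x := by rw [hFg]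
      _ = 𝓕⁻ (𝓕 (lfg k z)) (-x) := by
          rw [fourierInv_eq_fourier_neg, neg_neg]
      _ = lfg k z (-x) := by rw [this]
  -- summability of the m-side
  have h2πz : (0:ℝ) < 2 * π * z.im := by positivity
  have hnorm_m : ∀ m : ℕ, ‖((m : ℂ) + 1) ^ (k - 1) * Complex.exp (2 * π * I * ((m : ℂ) + 1) * z)‖
      = ((m:ℝ) + 1) ^ (k-1) * Real.exp (-(2 * π * z.im) * ((m:ℝ)+1)) := by
    intro m
    have : ((m : ℂ) + 1) ^ (k - 1) * Complex.exp (2 * π * I * ((m : ℂ) + 1) * z)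
        = lfg k z ((m:ℝ) + 1) := by
      rw [lfg]
      have hmax : max ((m:ℝ)+1) 0 = (m:ℝ)+1 := max_eq_left (by positivity)
      rw [hmax]
      push_cast
      ring_nf
    rw [this, lfg_norm hk hz (by positivity)]
  have hsum_m : Summable (fun m : ℕ => ((m : ℂ) + 1) ^ (k - 1) *
      Complex.exp (2 * π * I * ((m : ℂ) + 1) * z)) := by
    apply Summable.of_norm
    have base := summable_pow_mul_exp_neg_nat_mul (k-1) h2πz
    have shifted := (summable_nat_add_iff 1).mpr base
    refine shifted.congr fun m => ?_
    rw [hnorm_m m]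
    push_cast
    ring_nf
  -- summability of F over ℤ, hence of the n-side
  have hsumF : Summable (fun n : ℤ => F n) :=
    summable_of_isBigO (Real.summable_abs_int_rpow (by exact_mod_cast (by omega : 1 < k) : (1:ℝ) < k))
      (hFO.comp_tendsto Int.tendsto_coe_cofinite)
  have hsummz : Summable (fun n : ℤ => ((z - (n:ℂ)) ^ k)⁻¹) := by
    have := hsumF.mul_left c⁻¹
    refine this.congr fun n => ?_
    rw [hFdef]
    field_simp
    push_cast
    rfl
  have hsum_n : Summable (fun n : ℤ => ((z + n) ^ k)⁻¹) := by
    have := hsummz.comp_injective (neg_injective : Function.Injective (fun n : ℤ => -n))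
    refine this.congr fun n => ?_
    show ((z - ((-n : ℤ) : ℂ)) ^ k)⁻¹ = ((z + n) ^ k)⁻¹
    congr 2
    push_cast
    ring
  -- Poisson summation
  have hk1 : (1:ℝ) < (k:ℝ) := by exact_mod_cast (by omega : 1 < k)
  have hFfO : (𝓕 F) =O[cocompact ℝ] (fun x => |x| ^ (-(k:ℝ))) := by
    have hev2 : ∀ᶠ t : ℝ in atTop, t ^ (k-1) * Real.exp (-(2 * π * z.im) * t) ≤ (t ^ k)⁻¹ := by
      have htd := lf_tendsto_aux (2*k) h2πz
      have hev := htd.eventually (ge_mem_nhds (by norm_num : (0:ℝ) < 1))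
      filter_upwards [hev, eventually_ge_atTop (1:ℝ)] with t h1 ht1
      have ht0 : (0:ℝ) < t := lt_of_lt_of_le one_pos ht1
      have hsplit : t ^ (2*k) = t ^ k * t ^ (k - 1) * t := by
        rw [← pow_add, ← pow_succ]
        congr 1
        omega
      rw [hsplit] at h1
      have htk : (0:ℝ) < t ^ k := by positivity
      rw [inv_eq_one_div, le_div_iff₀ htk]
      calc t ^ (k-1) * Real.exp (-(2 * π * z.im) * t) * t ^ k
          = t ^ k * t ^ (k-1) * 1 * Real.exp (-(2 * π * z.im) * t) := by ring
        _ ≤ t ^ k * t ^ (k-1) * t * Real.exp (-(2 * π * z.im) * t) := by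
            have h3 := (Real.exp_pos (-(2 * π * z.im) * t)).le
            have h4 : (0:ℝ) < t ^ k * t ^ (k-1) := by positivity
            exact mul_le_mul_of_nonneg_right
              (mul_le_mul_of_nonneg_left ht1 h4.le) h3
        _ ≤ 1 := h1
    apply IsBigO.of_bound 1
    rw [cocompact_eq_atBot_atTop, eventually_sup]
    constructor
    · filter_upwards [tendsto_neg_atBot_atTop.eventually hev2,
        eventually_le_atBot (-1:ℝ)] with x hP hx1
      have hx0 : x < 0 := lt_of_le_of_lt hx1 (by norm_num)
      rw [hinv x, one_mul, lf_rpow_abs_norm, lfg_norm hk hz (by linarith : (0:ℝ) < -x),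
        abs_of_neg hx0]
      exact hP
    · filter_upwards [eventually_ge_atTop (0:ℝ)] with x hx
      rw [hinv x, lfg_eq_zero hk z (neg_nonpos.mpr hx)]
      simp only [norm_zero, one_mul]
      positivity
  -- Poisson summation
  have poisson := Real.tsum_eq_tsum_fourier_of_rpow_decay hFcont hk1 hFO hFfO 0
  -- identify the left-hand side
  have hterm : ∀ m : ℕ, lfg k z ((m:ℝ)+1)
      = ((m:ℂ)+1)^(k-1) * Complex.exp (2*π*I*((m:ℂ)+1)*z) := by
    intro m
    rw [lfg, max_eq_left (by positivity : (0:ℝ) ≤ (m:ℝ)+1)]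
    congr 2
    · push_cast; ring
    · push_cast; ring
  have hL : ∑' n : ℤ, F ((0:ℝ) + (n:ℤ)) = c * ∑' n : ℤ, ((z + n) ^ k)⁻¹ := by
    calc ∑' n : ℤ, F ((0:ℝ) + (n:ℤ))
        = ∑' n : ℤ, c * ((z + (((-n) : ℤ) : ℂ)) ^ k)⁻¹ := by
          congr 1
          funext n
          show c * ((z - ((0:ℝ) + (n:ℤ) : ℝ)) ^ k)⁻¹ = _
          congr 3
          push_cast
          ring
      _ = ∑' n : ℤ, c * ((z + (n : ℂ)) ^ k)⁻¹ :=
          (Equiv.neg ℤ).tsum_eq (fun n : ℤ => c * ((z + (n : ℂ)) ^ k)⁻¹)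
      _ = c * ∑' n : ℤ, ((z + n) ^ k)⁻¹ := tsum_mul_left
  -- identify the right-hand side
  have hR : ∑' n : ℤ, 𝓕 F n * fourier n (((0:ℝ)) : UnitAddCircle)
      = ∑' m : ℕ, ((m:ℂ)+1)^(k-1) * Complex.exp (2*π*I*((m:ℂ)+1)*z) := by
    have h1 : ∀ n : ℤ, 𝓕 F n * fourier n (((0:ℝ)) : UnitAddCircle) = lfg k z (-(n:ℝ)) := by
      intro n
      rw [QuotientAddGroup.mk_zero, fourier_eval_zero, mul_one, hinv]
    calc ∑' n : ℤ, 𝓕 F n * fourier n (((0:ℝ)) : UnitAddCircle)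
        = ∑' n : ℤ, lfg k z (-(n:ℝ)) := by
          congr 1; funext n; exact h1 n
      _ = ∑' m : ℕ, ((m:ℂ)+1)^(k-1) * Complex.exp (2*π*I*((m:ℂ)+1)*z) := by
          rw [← Function.Injective.tsum_eq (g := fun m : ℕ => -((m:ℤ)+1))
            (f := fun n : ℤ => lfg k z (-(n:ℝ))) ?_ ?_]
          · congr 1
            funext m
            show lfg k z (-(((-((m:ℤ)+1)) : ℤ) : ℝ)) = _
            rw [show (-(((-((m:ℤ)+1)) : ℤ) : ℝ)) = (m:ℝ)+1 by push_cast; ring]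
            exact hterm m
          · intro a b hab
            simpa using hab
          · intro n hn
            rcases le_or_gt n (-1) with h | h
            · refine ⟨(-n-1).toNat, ?_⟩
              show -(((-n-1).toNat : ℤ) + 1) = n
              rw [Int.toNat_of_nonneg (by omega)]
              ring
            · exfalso
              apply hn
              apply lfg_eq_zero hk z
              simp only [neg_nonpos]
              exact_mod_cast (by omega : (0:ℤ) ≤ n)
  rw [hL, hR] at poisson
  refine ⟨hsum_n, hsum_m, ?_⟩
  -- final algebra
  have hgamma : Complex.Gamma (k : ℂ) = (Nat.factorial (k-1) : ℂ) := by
    have hkc : (k:ℂ) = ((k-1 : ℕ) : ℂ) + 1 := by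
      have h : ((k - 1 + 1 : ℕ) : ℂ) = ((k-1:ℕ):ℂ) + 1 := by push_cast; ring
      rw [← h, (by omega : k - 1 + 1 = k)]
    rw [hkc, Complex.Gamma_nat_eq_factorial]
  have hneg : (-(2 * ↑π * I)) ^ k = (2 * ↑π * I) ^ k := hke.neg_pow _
  rw [hneg, hgamma]
  have hfac0 : (Nat.factorial (k-1) : ℂ) ≠ 0 := Nat.cast_ne_zero.mpr (Nat.factorial_ne_zero _)
  rw [← poisson, hc]
  field_simp

end
end

section
/- For complex s₁, s₂ with Re(s₁) > −k/2 + 1, Re(s₁) < k/2, Re(s₂) < k/2, and Re(s₁+s₂) > 0, and even integer k ≥ 4, the double integral J(s₁,s₂,k) = ∫₀^∞∫₀^∞ y₁^{−s₁+k/2} y₂^{−s₂+k/2} / (1 + i y₁ + i y₂)^k (dy₁/y₁)(dy₂/y₂) converges and equals (e^{πi(s₁+s₂)/2} / i^k) · Γ(−s₁+k/2) Γ(−s₂+k/2) Γ(s₁+s₂) / Γ(k). -/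
open Complex Real MeasureTheory Set Filter Metric

namespace JAux


lemma intBeta {p q : ℝ} (hp : 0 < p) (hpq : p < q) :
    IntegrableOn (fun y : ℝ => y ^ (p - 1) * (1 + y) ^ (-q)) (Ioi 0) := by
  have hmeas : AEStronglyMeasurable (fun y : ℝ => y ^ (p - 1) * (1 + y) ^ (-q))
      (volume.restrict (Ioi (0:ℝ))) :=
    by
      apply ContinuousOn.aestronglyMeasurable ?_ measurableSet_Ioi
      intro y hy
      have hy0 : y ≠ 0 := ne_of_gt hy
      have h1 : ContinuousAt (fun y : ℝ => y ^ (p - 1)) y :=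
        Real.continuousAt_rpow_const y _ (Or.inl hy0)
      have h2 : ContinuousAt (fun y : ℝ => (1 + y) ^ (-q)) y := by
        have := Real.continuousAt_rpow_const (1 + y) (-q) (Or.inl (by intro h; simp at hy; linarith [hy]))
        exact this.comp (continuous_const.add continuous_id).continuousAt
      exact (h1.mul h2).continuousWithinAt
  rw [show Ioi (0:ℝ) = Ioc 0 1 ∪ Ioi 1 from (Ioc_union_Ioi_eq_Ioi zero_le_one).symm]
  apply IntegrableOn.union
  · apply Integrable.mono' (g := fun y : ℝ => y ^ (p - 1))
      ((intervalIntegral.intervalIntegrable_rpow' (by linarith : (-1:ℝ) < p - 1)).1)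
      (hmeas.mono_measure (Measure.restrict_mono Ioc_subset_Ioi_self le_rfl))
    rw [ae_restrict_iff' measurableSet_Ioc]
    filter_upwards with y hy
    have hy0 : 0 < y := hy.1
    have h1 : (1 + y) ^ (-q) ≤ 1 :=
      Real.rpow_le_one_of_one_le_of_nonpos (by linarith) (by linarith)
    have h2 : 0 ≤ y ^ (p - 1) := Real.rpow_nonneg hy0.le _
    rw [Real.norm_eq_abs, _root_.abs_of_nonneg (mul_nonneg h2 (Real.rpow_nonneg (by linarith) _))]
    calc y ^ (p - 1) * (1 + y) ^ (-q) ≤ y ^ (p - 1) * 1 := by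
          apply mul_le_mul_of_nonneg_left h1 h2
      _ = y ^ (p - 1) := mul_one _
  · apply Integrable.mono' (g := fun y : ℝ => y ^ (p - 1 - q))
      (integrableOn_Ioi_rpow_of_lt (by linarith) one_pos)
      (hmeas.mono_measure (Measure.restrict_mono (Ioi_subset_Ioi zero_le_one) le_rfl))
    rw [ae_restrict_iff' measurableSet_Ioi]
    filter_upwards with y hy
    have hy1 : (1:ℝ) < y := hy
    have hy0 : (0:ℝ) < y := by linarith
    have h1 : (1 + y) ^ (-q) ≤ y ^ (-q) :=
      Real.rpow_le_rpow_of_nonpos hy0 (by linarith) (by linarith)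
    have h2 : 0 ≤ y ^ (p - 1) := Real.rpow_nonneg hy0.le _
    rw [Real.norm_eq_abs, _root_.abs_of_nonneg (mul_nonneg h2 (Real.rpow_nonneg (by linarith) _))]
    calc y ^ (p - 1) * (1 + y) ^ (-q) ≤ y ^ (p - 1) * y ^ (-q) :=
          mul_le_mul_of_nonneg_left h1 h2
      _ = y ^ (p - 1 - q) := by rw [← Real.rpow_add hy0]; ring_nf

lemma slit_preconn : IsPreconnected Complex.slitPlane := by
  have hstar : StarConvex ℝ 1 Complex.slitPlane := by
    intro x hx a b ha hb hab
    have hpt : a • (1:ℂ) + b • x = (a:ℂ) + (b:ℂ) * x := by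
      simp [Complex.real_smul]
    rw [hpt]
    by_cases hb0 : b = 0
    · subst hb0
      have : a = 1 := by linarith
      subst this
      simpa using Complex.one_mem_slitPlane
    · have hb' : 0 < b := lt_of_le_of_ne hb (Ne.symm hb0)
      rcases hx with hre | him
      · left
        have : ((a:ℂ) + (b:ℂ) * x).re = a + b * x.re := by simp
        rw [this]
        nlinarith
      · right
        have : ((a:ℂ) + (b:ℂ) * x).im = b * x.im := by simp
        rw [this]
        exact mul_ne_zero hb0 him
  have hpath : IsPathConnected Complex.slitPlane := by
    refine isPathConnected_iff.mpr ⟨⟨1, Complex.one_mem_slitPlane⟩, fun x hx y hy => ?_⟩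
    exact (JoinedIn.of_segment_subset (hstar.segment_subset hx)).symm.trans
      (JoinedIn.of_segment_subset (hstar.segment_subset hy))
  exact hpath.isConnected.isPreconnected

lemma slit_lower {w₀ : ℂ} (hw : w₀ ∈ Complex.slitPlane) :
    ∃ r > 0, ∃ c > 0, Metric.ball w₀ r ⊆ Complex.slitPlane ∧
      ∀ w ∈ Metric.ball w₀ r, ∀ y : ℝ, 0 ≤ y →
        c * (1 + y) ≤ ‖((y : ℂ) + w)‖ := by
  set S : Set ℂ := {z | z.im = 0 ∧ z.re ≤ 0} with hS
  have hSc : IsClosed S := (isClosed_eq Complex.continuous_im continuous_const).inter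
      (isClosed_le Complex.continuous_re continuous_const)
  have hSne : S.Nonempty := ⟨0, by simp [hS]⟩
  have hw0 : w₀ ∉ S := by
    rintro ⟨h1, h2⟩
    rcases hw with h | h
    · exact absurd h (not_lt.2 h2)
    · exact h h1
  have hd : 0 < Metric.infDist w₀ S := (hSc.notMem_iff_infDist_pos hSne).mp hw0
  set d := Metric.infDist w₀ S with hd_def
  set T : ℝ := 2 * (‖w₀‖ + d) + 1 with hT_def
  have hT : 0 < T := by positivity
  refine ⟨d / 2, by positivity, min (d / (2 * (1 + T))) (1 / 2), by positivity, ?_, ?_⟩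
  · intro w hwball
    by_contra hns
    have hwS : w ∈ S := by
      simp only [Complex.mem_slitPlane_iff, not_or, not_lt, ne_eq, not_not] at hns
      exact ⟨hns.2, hns.1⟩
    have h1 : d ≤ dist w₀ w := Metric.infDist_le_dist_of_mem hwS
    rw [mem_ball, dist_comm] at hwball
    linarith
  · intro w hwball y hy
    rw [mem_ball] at hwball
    have hdist : dist w₀ w < d / 2 := by rwa [dist_comm]
    have hwS2 : d / 2 ≤ Metric.infDist w S := by
      have h := Metric.infDist_le_infDist_add_dist (x := w₀) (y := w) (s := S)
      linarith
    have hyS : ((-y : ℝ) : ℂ) ∈ S := by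
      constructor
      · simp
      · simp [hy]
    have h1 : d / 2 ≤ ‖((y : ℂ) + w)‖ := by
      have h2 := Metric.infDist_le_dist_of_mem (x := w) hyS
      rw [Complex.dist_eq] at h2
      have h3 : w - ((-y : ℝ) : ℂ) = (y : ℂ) + w := by push_cast; ring
      rw [h3] at h2
      linarith
    have habsw : ‖w‖ ≤ ‖w₀‖ + d / 2 := by
      have h4 : ‖(w - w₀)‖ < d / 2 := by
        rw [← Complex.dist_eq]; exact hwball
      have := norm_add_le (w - w₀) w₀
      simp only [sub_add_cancel] at this
      linarith
    have h2 : y - (‖w₀‖ + d / 2) ≤ ‖((y : ℂ) + w)‖ := by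
      have h5 : ‖((y:ℂ))‖ ≤ ‖((y:ℂ) + w)‖ + ‖w‖ := by
        have := norm_add_le ((y:ℂ) + w) (-w)
        simpa using this
      have h6 : ‖((y:ℂ))‖ = y := by
        rw [Complex.norm_of_nonneg hy]
      linarith
    by_cases hyT : y ≤ T
    · calc min (d / (2 * (1 + T))) (1 / 2) * (1 + y) ≤ (d / (2 * (1 + T))) * (1 + T) := by
            apply mul_le_mul (min_le_left _ _) (by linarith) (by linarith) (by positivity)
        _ = d / 2 := by field_simp
        _ ≤ _ := h1
    · push_neg at hyT
      calc min (d / (2 * (1 + T))) (1 / 2) * (1 + y) ≤ (1 / 2) * (1 + y) := by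
            apply mul_le_mul_of_nonneg_right (min_le_right _ _) (by linarith)
        _ ≤ y - (‖w₀‖ + d / 2) := by
            rw [hT_def] at hyT
            linarith
        _ ≤ _ := h2


lemma bound1 {ν : ℂ} (hν : ν.re ≤ 0) {z : ℂ} {m : ℝ} (hm : 0 < m)
    (hmz : m ≤ ‖z‖) :
    ‖z ^ ν‖ ≤ Real.exp (π * |ν.im|) * m ^ ν.re := by
  have hz : z ≠ 0 := by
    intro h; rw [h] at hmz; simp at hmz; linarith
  rw [Complex.norm_cpow_of_ne_zero hz]
  have h1 : (‖z‖) ^ ν.re ≤ m ^ ν.re :=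
    Real.rpow_le_rpow_of_nonpos hm hmz hν
  have h2 : Real.exp (-(π * |ν.im|)) ≤ Real.exp (z.arg * ν.im) := by
    apply Real.exp_le_exp.mpr
    have harg := Complex.abs_arg_le_pi z
    have : |z.arg * ν.im| ≤ π * |ν.im| := by
      rw [abs_mul]
      exact mul_le_mul_of_nonneg_right harg (abs_nonneg _)
    linarith [neg_abs_le (z.arg * ν.im)]
  calc ‖z‖ ^ ν.re / Real.exp (z.arg * ν.im)
      ≤ m ^ ν.re / Real.exp (-(π * |ν.im|)) :=
        div_le_div₀ (Real.rpow_nonneg hm.le _) h1 (Real.exp_pos _) h2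
    _ = Real.exp (π * |ν.im|) * m ^ ν.re := by
        rw [Real.exp_neg, div_eq_mul_inv, inv_inv, mul_comm]

lemma F_bound (a : ℂ) {μ : ℂ} (hμ : 0 ≤ μ.re) {w : ℂ} {c y : ℝ} (hc : 0 < c) (hy : 0 < y)
    (hlb : c * (1 + y) ≤ ‖((y : ℂ) + w)‖) :
    ‖(y : ℂ) ^ (a - 1) * ((y : ℂ) + w) ^ (-μ)‖ ≤
      Real.exp (π * |μ.im|) * c ^ (-μ.re) * (y ^ (a.re - 1) * (1 + y) ^ (-μ.re)) := by
  rw [norm_mul]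
  have h1 : ‖(y : ℂ) ^ (a - 1)‖ = y ^ (a.re - 1) := by
    rw [Complex.norm_cpow_eq_rpow_re_of_pos hy]
    norm_num
  have hm : 0 < c * (1 + y) := by positivity
  have h2 : ‖((y : ℂ) + w) ^ (-μ)‖ ≤
      Real.exp (π * |(-μ).im|) * (c * (1 + y)) ^ (-μ).re := by
    exact bound1 (by simpa using hμ) hm hlb
  have h3 : (c * (1 + y)) ^ (-μ).re = c ^ (-μ.re) * (1 + y) ^ (-μ.re) := by
    rw [Complex.neg_re, Real.mul_rpow hc.le (by linarith)]
  rw [h3] at h2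
  simp only [Complex.neg_im, abs_neg] at h2
  calc ‖(y : ℂ) ^ (a - 1)‖ * ‖((y : ℂ) + w) ^ (-μ)‖
      ≤ y ^ (a.re - 1) * (Real.exp (π * |μ.im|) * (c ^ (-μ.re) * (1 + y) ^ (-μ.re))) := by
        rw [h1]
        exact mul_le_mul_of_nonneg_left h2 (Real.rpow_nonneg hy.le _)
    _ = Real.exp (π * |μ.im|) * c ^ (-μ.re) * (y ^ (a.re - 1) * (1 + y) ^ (-μ.re)) := by ring

lemma slit_add {w : ℂ} (hw : w ∈ Complex.slitPlane) {y : ℝ} (hy : 0 < y) :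
    (y : ℂ) + w ∈ Complex.slitPlane := by
  rcases hw with h | h
  · left; simp only [Complex.add_re, Complex.ofReal_re]; linarith
  · right; simpa using h

lemma F_cont (a μ : ℂ) {w : ℂ} (hw : w ∈ Complex.slitPlane) :
    ContinuousOn (fun y : ℝ => (y : ℂ) ^ (a - 1) * ((y : ℂ) + w) ^ (-μ)) (Ioi 0) := by
  intro y hy
  have hy0 : (0:ℝ) < y := hy
  have h1 : ((y : ℝ) : ℂ) ∈ Complex.slitPlane := by
    left; simpa using hy0
  have h2 : ((y : ℝ) : ℂ) + w ∈ Complex.slitPlane := slit_add hw hy0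
  have c1 : ContinuousAt (fun t : ℝ => ((t : ℂ)) ^ (a - 1)) y :=
    (Complex.continuous_ofReal.continuousAt).cpow continuousAt_const h1
  have c2 : ContinuousAt (fun t : ℝ => ((t : ℂ) + w) ^ (-μ)) y := by
    have hin : ContinuousAt (fun t : ℝ => (t : ℂ) + w) y :=
      (Complex.continuous_ofReal.continuousAt).add continuousAt_const
    exact hin.cpow continuousAt_const h2
  exact (c1.mul c2).continuousWithinAt

lemma F_integrableOn {a μ : ℂ} (ha : 0 < a.re) (ham : a.re < μ.re) {w : ℂ}
    (hw : w ∈ Complex.slitPlane) {c : ℝ} (hc : 0 < c)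
    (hlb : ∀ y : ℝ, 0 ≤ y → c * (1 + y) ≤ ‖((y : ℂ) + w)‖) :
    IntegrableOn (fun y : ℝ => (y : ℂ) ^ (a - 1) * ((y : ℂ) + w) ^ (-μ)) (Ioi 0) := by
  apply Integrable.mono' ((intBeta ha ham).const_mul (Real.exp (π * |μ.im|) * c ^ (-μ.re)))
    ((F_cont a μ hw).aestronglyMeasurable measurableSet_Ioi)
  rw [ae_restrict_iff' measurableSet_Ioi]
  filter_upwards with y hy
  have hy0 : (0:ℝ) < y := hy
  have := F_bound a (by linarith : 0 ≤ μ.re) hc hy0 (hlb y hy0.le)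
  calc ‖(y : ℂ) ^ (a - 1) * ((y : ℂ) + w) ^ (-μ)‖
      ≤ Real.exp (π * |μ.im|) * c ^ (-μ.re) * (y ^ (a.re - 1) * (1 + y) ^ (-μ.re)) := this
    _ = Real.exp (π * |μ.im|) * c ^ (-μ.re) * (y ^ (a.re - 1) * (1 + y) ^ (-μ.re)) := rfl

lemma betaIoi (a μ : ℂ) (ha : 0 < a.re) (ham : a.re < μ.re) :
    ∫ y in Ioi (0:ℝ), (y : ℂ) ^ (a - 1) * (1 + (y : ℂ)) ^ (-μ)
      = Complex.Gamma a * Complex.Gamma (μ - a) / Complex.Gamma μ := by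
  have himg : (fun x : ℝ => x / (1 - x)) '' (Ioo 0 1) = Ioi 0 := by
    ext u
    constructor
    · rintro ⟨x, ⟨hx0, hx1⟩, rfl⟩
      exact div_pos hx0 (by linarith)
    · intro hu
      have hu0 : (0:ℝ) < u := hu
      refine ⟨u / (1 + u), ⟨by positivity, ?_⟩, ?_⟩
      · rw [div_lt_one (by linarith)]; linarith
      · field_simp; ring
  have hderiv : ∀ x ∈ Ioo (0:ℝ) 1, HasDerivWithinAt (fun x : ℝ => x / (1 - x))
      (((1 - x) ^ 2)⁻¹) (Ioo 0 1) x := by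
    intro x hx
    have hx1 : (1:ℝ) - x ≠ 0 := by have := hx.2; intro h; linarith
    have h := (hasDerivAt_id x).div ((hasDerivAt_const x (1:ℝ)).sub (hasDerivAt_id x)) hx1
    refine h.hasDerivWithinAt.congr_deriv ?_
    simp only [Pi.sub_apply, id_eq]
    field_simp
    ring
  have hinj : InjOn (fun x : ℝ => x / (1 - x)) (Ioo 0 1) := by
    intro x hx y hy h
    have hx1 : (1:ℝ) - x ≠ 0 := by have := hx.2; intro hh; linarith
    have hy1 : (1:ℝ) - y ≠ 0 := by have := hy.2; intro hh; linarith
    field_simp at h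
    nlinarith [h]
  rw [← himg, integral_image_eq_integral_abs_deriv_smul measurableSet_Ioo hderiv hinj]
  have hpt : ∀ x ∈ Ioo (0:ℝ) 1,
      |((1 - x) ^ 2)⁻¹| • ((↑(x / (1 - x)) : ℂ) ^ (a - 1) * (1 + (↑(x / (1 - x)) : ℂ)) ^ (-μ))
        = (x : ℂ) ^ (a - 1) * (1 - (x : ℂ)) ^ (μ - a - 1) := by
    intro x hx
    obtain ⟨hx0, hx1⟩ := hx
    have ht : 0 < 1 - x := by linarith
    set t : ℝ := 1 - x with ht_def
    have htC : ((t : ℝ) : ℂ) ≠ 0 := by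
      simp only [ne_eq, Complex.ofReal_eq_zero]; intro h; rw [h] at ht; exact lt_irrefl 0 ht
    have harg : ((t : ℝ) : ℂ).arg ≠ π := by
      rw [Complex.arg_ofReal_of_nonneg ht.le]
      exact Real.pi_ne_zero.symm
    have h1 : (1 : ℂ) + (↑(x / t) : ℂ) = ((t : ℝ) : ℂ)⁻¹ := by
      rw [show (1:ℂ) + (↑(x / t) : ℂ) = ((1 + x / t : ℝ) : ℂ) by push_cast; ring]
      rw [← Complex.ofReal_inv]
      congr 1
      field_simp
      linarith
    have h2 : (((t : ℝ) : ℂ))⁻¹ ^ (-μ) = ((t : ℝ) : ℂ) ^ μ := by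
      rw [Complex.inv_cpow _ _ harg, ← Complex.cpow_neg, neg_neg]
    have h3 : (↑(x / t) : ℂ) ^ (a - 1) = (x : ℂ) ^ (a - 1) * ((t : ℝ) : ℂ) ^ (-(a - 1)) := by
      rw [show (x / t : ℝ) = x * t⁻¹ by ring, Complex.ofReal_mul,
        Complex.mul_cpow_ofReal_nonneg hx0.le (inv_nonneg.mpr ht.le)]
      congr 1
      rw [Complex.ofReal_inv, Complex.inv_cpow _ _ harg, ← Complex.cpow_neg]
    have h6 : (((t : ℝ) : ℂ) ^ (2:ℕ))⁻¹ = ((t : ℝ) : ℂ) ^ (-2 : ℂ) := by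
      rw [← Complex.cpow_natCast, ← Complex.cpow_neg]
      norm_num
    have h5 : ((t:ℝ):ℂ) ^ (-(a-1)) * (((t:ℝ):ℂ) ^ μ * ((t:ℝ):ℂ) ^ (-2:ℂ))
        = ((t:ℝ):ℂ) ^ (μ - a - 1) := by
      rw [← Complex.cpow_add _ _ htC, ← Complex.cpow_add _ _ htC]
      congr 1
      ring
    have hsm : |((1 - x) ^ 2)⁻¹| • ((↑(x / (1 - x)) : ℂ) ^ (a - 1) * (1 + (↑(x / (1 - x)) : ℂ)) ^ (-μ))
        = ((((t:ℝ):ℂ)) ^ (2:ℕ))⁻¹ * ((↑(x / t) : ℂ) ^ (a - 1) * (1 + (↑(x / t) : ℂ)) ^ (-μ)) := by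
      rw [← ht_def]
      rw [Complex.real_smul]
      congr 1
      rw [_root_.abs_of_nonneg (by positivity : (0:ℝ) ≤ ((t) ^ 2)⁻¹)]
      push_cast
      ring
    rw [hsm, h3, h1, h2, h6]
    have hone : (1 : ℂ) - (x : ℂ) = ((t : ℝ) : ℂ) := by
      rw [ht_def]; push_cast; ring
    rw [hone]
    calc ((t:ℝ):ℂ) ^ (-2:ℂ) * ((x:ℂ) ^ (a-1) * ((t:ℝ):ℂ) ^ (-(a-1)) * ((t:ℝ):ℂ) ^ μ)
        = (x:ℂ) ^ (a-1) * (((t:ℝ):ℂ) ^ (-(a-1)) * (((t:ℝ):ℂ) ^ μ * ((t:ℝ):ℂ) ^ (-2:ℂ))) := by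
          ring
      _ = (x:ℂ) ^ (a-1) * ((t:ℝ):ℂ) ^ (μ - a - 1) := by rw [h5]
  rw [setIntegral_congr_fun measurableSet_Ioo hpt]
  have hbeta : ∫ x in Ioo (0:ℝ) 1, (x : ℂ) ^ (a - 1) * (1 - (x : ℂ)) ^ (μ - a - 1)
      = Complex.betaIntegral a (μ - a) := by
    rw [Complex.betaIntegral, intervalIntegral.integral_of_le zero_le_one,
      ← MeasureTheory.integral_Ioc_eq_integral_Ioo]
  rw [hbeta]
  have hμa : 0 < (μ - a).re := by
    rw [Complex.sub_re]; linarith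
  have hβ := Complex.Gamma_mul_Gamma_eq_betaIntegral ha hμa
  have hμ : a + (μ - a) = μ := by ring
  rw [hμ] at hβ
  have hΓμ : Complex.Gamma μ ≠ 0 := Complex.Gamma_ne_zero_of_re_pos (by linarith)
  field_simp [hβ]
  rw [hβ]; ring

lemma master_real (a μ : ℂ) (ha : 0 < a.re) (ham : a.re < μ.re) {r : ℝ} (hr : 0 < r) :
    ∫ y in Ioi (0:ℝ), (y : ℂ) ^ (a - 1) * ((y : ℂ) + ((r : ℝ) : ℂ)) ^ (-μ)
      = ((r : ℝ) : ℂ) ^ (a - μ) * Complex.Gamma a * Complex.Gamma (μ - a) /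
          Complex.Gamma μ := by
  have hrC : ((r : ℝ) : ℂ) ≠ 0 := by
    simp only [ne_eq, Complex.ofReal_eq_zero]; linarith
  have hkey := MeasureTheory.integral_comp_mul_left_Ioi
    (fun y : ℝ => (y : ℂ) ^ (a - 1) * ((y : ℂ) + ((r : ℝ) : ℂ)) ^ (-μ)) 0 hr
  rw [mul_zero] at hkey
  -- hkey : ∫ x in Ioi 0, f (r * x) = r⁻¹ • ∫ y in Ioi 0, f y
  have hmain : ∫ x in Ioi (0:ℝ), ((r * x : ℝ) : ℂ) ^ (a - 1) * (((r * x : ℝ) : ℂ) + ((r : ℝ) : ℂ)) ^ (-μ)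
      = (((r : ℝ) : ℂ) ^ (a - 1) * ((r : ℝ) : ℂ) ^ (-μ)) *
          ∫ x in Ioi (0:ℝ), (x : ℂ) ^ (a - 1) * (1 + (x : ℂ)) ^ (-μ) := by
    rw [← MeasureTheory.integral_const_mul]
    apply setIntegral_congr_fun measurableSet_Ioi
    intro x hx
    have hx0 : (0:ℝ) < x := hx
    have e1 : ((r * x : ℝ) : ℂ) ^ (a - 1) = ((r:ℝ):ℂ) ^ (a-1) * ((x:ℝ):ℂ) ^ (a-1) := by
      rw [Complex.ofReal_mul, Complex.mul_cpow_ofReal_nonneg hr.le hx0.le]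
    have e2 : (((r * x : ℝ) : ℂ) + ((r : ℝ) : ℂ)) ^ (-μ)
        = ((r:ℝ):ℂ) ^ (-μ) * (1 + (x : ℂ)) ^ (-μ) := by
      rw [show ((r * x : ℝ) : ℂ) + ((r : ℝ) : ℂ) = ((r * (1 + x) : ℝ) : ℂ) by push_cast; ring]
      rw [Complex.ofReal_mul, Complex.mul_cpow_ofReal_nonneg hr.le (by linarith)]
      norm_num
    dsimp only
    rw [e1, e2]
    ring
  rw [hmain] at hkey
  have hrinv : (∫ y in Ioi (0:ℝ), (y : ℂ) ^ (a - 1) * ((y : ℂ) + ((r : ℝ) : ℂ)) ^ (-μ))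
      = (r : ℝ) • ((((r : ℝ) : ℂ) ^ (a - 1) * ((r : ℝ) : ℂ) ^ (-μ)) *
          ∫ x in Ioi (0:ℝ), (x : ℂ) ^ (a - 1) * (1 + (x : ℂ)) ^ (-μ)) := by
    calc (∫ y in Ioi (0:ℝ), (y : ℂ) ^ (a - 1) * ((y : ℂ) + ((r : ℝ) : ℂ)) ^ (-μ))
        = (r : ℝ) • (r⁻¹ • ∫ y in Ioi (0:ℝ), (y : ℂ) ^ (a - 1) * ((y : ℂ) + ((r : ℝ) : ℂ)) ^ (-μ)) := by
          rw [smul_smul, mul_inv_cancel₀ (ne_of_gt hr), one_smul]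
      _ = _ := by rw [← hkey]
  rw [hrinv, betaIoi a μ ha ham, Complex.real_smul]
  have hpow : ((r : ℝ) : ℂ) * (((r : ℝ) : ℂ) ^ (a - 1) * ((r : ℝ) : ℂ) ^ (-μ))
      = ((r : ℝ) : ℂ) ^ (a - μ) := by
    nth_rewrite 1 [← Complex.cpow_one ((r : ℝ) : ℂ)]
    rw [← Complex.cpow_add _ _ hrC, ← Complex.cpow_add _ _ hrC]
    congr 1
    ring
  rw [← mul_assoc, hpow]
  ring

lemma master_holo (a μ : ℂ) (ha : 0 < a.re) (ham : a.re < μ.re) :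
    DifferentiableOn ℂ
      (fun w => ∫ y in Ioi (0:ℝ), (y : ℂ) ^ (a - 1) * ((y : ℂ) + w) ^ (-μ))
      Complex.slitPlane := by
  intro w₀ hw₀
  obtain ⟨r, hr, c, hc, hball, hlb⟩ := slit_lower hw₀
  have hμ1 : 0 ≤ (μ + 1).re := by
    rw [Complex.add_re, Complex.one_re]; linarith
  set bnd : ℝ → ℝ := fun y =>
    (‖μ‖ * (Real.exp (π * |(μ+1).im|) * c ^ (-(μ+1).re))) *
      (y ^ (a.re - 1) * (1 + y) ^ (-(μ.re + 1))) with hbnd_def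
  have key := hasDerivAt_integral_of_dominated_loc_of_deriv_le
    (F := fun w (y : ℝ) => (y : ℂ) ^ (a - 1) * ((y : ℂ) + w) ^ (-μ))
    (F' := fun w (y : ℝ) => (y : ℂ) ^ (a - 1) * (-μ * ((y : ℂ) + w) ^ (-μ - 1) * 1))
    (μ := volume.restrict (Ioi (0:ℝ))) (x₀ := w₀) (bound := bnd) (Metric.ball_mem_nhds w₀ hr)
    ?_ ?_ ?_ ?_ ?_ ?_
  · exact (key.2.differentiableAt).differentiableWithinAt
  · -- measurability eventually
    filter_upwards [isOpen_ball.eventually_mem (mem_ball_self hr)] with w hw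
    exact ((F_cont a μ (hball hw)).aestronglyMeasurable measurableSet_Ioi)
  · exact F_integrableOn ha ham (hball (mem_ball_self hr)) hc (hlb w₀ (mem_ball_self hr))
  · -- measurability of F' at w₀
    apply ContinuousOn.aestronglyMeasurable ?_ measurableSet_Ioi
    intro y hy
    have hy0 : (0:ℝ) < y := hy
    have h1 : ((y : ℝ) : ℂ) ∈ Complex.slitPlane := by left; simpa using hy0
    have h2 : ((y : ℝ) : ℂ) + w₀ ∈ Complex.slitPlane := slit_add hw₀ hy0
    have c1 : ContinuousAt (fun t : ℝ => ((t : ℂ)) ^ (a - 1)) y :=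
      (Complex.continuous_ofReal.continuousAt).cpow continuousAt_const h1
    have c2 : ContinuousAt (fun t : ℝ => ((t : ℂ) + w₀) ^ (-μ - 1)) y := by
      have hin : ContinuousAt (fun t : ℝ => (t : ℂ) + w₀) y :=
        (Complex.continuous_ofReal.continuousAt).add continuousAt_const
      exact hin.cpow continuousAt_const h2
    exact (c1.mul ((continuousAt_const.mul c2).mul continuousAt_const)).continuousWithinAt
  · -- bound
    rw [ae_restrict_iff' measurableSet_Ioi]
    filter_upwards with y hy
    intro w hw
    have hy0 : (0:ℝ) < y := hy
    have hF := F_bound a (μ := μ + 1) hμ1 hc hy0 (hlb w hw y hy0.le)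
    have hexp : -(μ + 1) = -μ - 1 := by ring
    rw [hexp] at hF
    calc ‖(y : ℂ) ^ (a - 1) * (-μ * ((y : ℂ) + w) ^ (-μ - 1) * 1)‖
        = ‖μ‖ * ‖(y : ℂ) ^ (a - 1) * ((y : ℂ) + w) ^ (-μ - 1)‖ := by
          rw [mul_one]
          simp only [norm_mul, norm_neg]
          ring
      _ ≤ ‖μ‖ *
            (Real.exp (π * |(μ+1).im|) * c ^ (-(μ+1).re) *
              (y ^ (a.re - 1) * (1 + y) ^ (-(μ+1).re))) := by
          apply mul_le_mul_of_nonneg_left _ (norm_nonneg μ)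
          simpa using hF
      _ = bnd y := by
          rw [hbnd_def]
          have : ((μ:ℂ)+1).re = μ.re + 1 := by simp
          rw [this]
          ring
  · -- integrability of bound
    exact (intBeta ha (by linarith : a.re < μ.re + 1)).const_mul _
  · -- derivative
    rw [ae_restrict_iff' measurableSet_Ioi]
    filter_upwards with y hy
    intro w hw
    have hy0 : (0:ℝ) < y := hy
    have h2 : ((y : ℝ) : ℂ) + w ∈ Complex.slitPlane := slit_add (hball hw) hy0
    have hd : HasDerivAt (fun w : ℂ => ((y : ℂ) + w) ^ (-μ))
        (-μ * ((y : ℂ) + w) ^ (-μ - 1) * 1) w := by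
      apply HasDerivAt.cpow_const _ h2
      simpa using (hasDerivAt_id w).const_add ((y : ℝ) : ℂ)
    exact hd.const_mul ((y : ℂ) ^ (a - 1))

lemma master (a μ : ℂ) (ha : 0 < a.re) (ham : a.re < μ.re) {w : ℂ}
    (hw : w ∈ Complex.slitPlane) :
    IntegrableOn (fun y : ℝ => (y : ℂ) ^ (a - 1) * ((y : ℂ) + w) ^ (-μ)) (Ioi 0) ∧
      ∫ y in Ioi (0:ℝ), (y : ℂ) ^ (a - 1) * ((y : ℂ) + w) ^ (-μ)
        = w ^ (a - μ) * Complex.Gamma a * Complex.Gamma (μ - a) / Complex.Gamma μ := by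
  constructor
  · obtain ⟨r, hr, c, hc, hball, hlb⟩ := slit_lower hw
    exact F_integrableOn ha ham hw hc (hlb w (mem_ball_self hr))
  · set G : ℂ → ℂ :=
      fun w => ∫ y in Ioi (0:ℝ), (y : ℂ) ^ (a - 1) * ((y : ℂ) + w) ^ (-μ) with hG_def
    set H : ℂ → ℂ :=
      fun w => w ^ (a - μ) * Complex.Gamma a * Complex.Gamma (μ - a) / Complex.Gamma μ
      with hH_def
    have hG : AnalyticOnNhd ℂ G Complex.slitPlane :=
      (master_holo a μ ha ham).analyticOnNhd Complex.isOpen_slitPlane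
    have hH : AnalyticOnNhd ℂ H Complex.slitPlane := by
      intro z hz
      have h1 : AnalyticAt ℂ (fun w : ℂ => w ^ (a - μ)) z :=
        (analyticAt_id).cpow analyticAt_const hz
      exact ((h1.mul analyticAt_const).mul analyticAt_const).div analyticAt_const
        (Complex.Gamma_ne_zero_of_re_pos (by linarith))
    -- frequently equal near 1
    have hfreq : ∃ᶠ z in nhdsWithin (1:ℂ) {z | z ≠ 1}, G z = H z := by
      have hseq : Tendsto (fun n : ℕ => ((1 + ((n:ℝ)+1)⁻¹ : ℝ) : ℂ)) atTop
          (nhdsWithin (1:ℂ) {z | z ≠ 1}) := by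
        rw [tendsto_nhdsWithin_iff]
        constructor
        · have h0 : Tendsto (fun n : ℕ => (1 + ((n:ℝ)+1)⁻¹ : ℝ)) atTop (nhds 1) := by
            have := tendsto_one_div_add_atTop_nhds_zero_nat (𝕜 := ℝ)
            have h2 : Tendsto (fun n : ℕ => 1 + 1 / ((n:ℝ)+1)) atTop (nhds (1 + 0)) :=
              tendsto_const_nhds.add this
            simpa [one_div] using h2
          have := (Complex.continuous_ofReal.tendsto 1).comp h0
          simpa [Function.comp_def] using this
        · filter_upwards with n
          simp only [mem_setOf_eq, ne_eq]
          intro h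
          rw [show (1:ℂ) = ((1:ℝ):ℂ) by norm_num, Complex.ofReal_inj] at h
          have : (0:ℝ) < ((n:ℝ)+1)⁻¹ := by positivity
          linarith
      apply hseq.frequently
      apply Frequently.of_forall
      intro n
      have hrpos : (0:ℝ) < 1 + ((n:ℝ)+1)⁻¹ := by positivity
      rw [hG_def, hH_def]
      exact master_real a μ ha ham hrpos
    have heq : EqOn G H Complex.slitPlane :=
      hG.eqOn_of_preconnected_of_frequently_eq hH slit_preconn
        Complex.one_mem_slitPlane hfreq
    exact heq hw


end JAux

open JAux



open Complex Real MeasureTheory Set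

/-- For even `k ≥ 4` and `−k/2+1 < Re s₁ < k/2`, `Re s₂ < k/2`, `Re(s₁+s₂) > 0`:
`J(s₁,s₂,k) = ∫₀^∞∫₀^∞ y₁^{−s₁+k/2} y₂^{−s₂+k/2}/(1+iy₁+iy₂)^k (dy₁/y₁)(dy₂/y₂)`
converges and equals `(e^{πi(s₁+s₂)/2}/i^k)·Γ(−s₁+k/2)Γ(−s₂+k/2)Γ(s₁+s₂)/Γ(k)`. -/
theorem J_dual_integral (k : ℕ) (hk : 4 ≤ k) (hke : Even k) (s₁ s₂ : ℂ)
    (h₁ : -(k : ℝ) / 2 + 1 < s₁.re) (h₂ : s₁.re < (k : ℝ) / 2)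
    (h₃ : s₂.re < (k : ℝ) / 2) (h₄ : 0 < (s₁ + s₂).re) :
    MeasureTheory.IntegrableOn
      (fun p : ℝ × ℝ =>
        (p.1 : ℂ) ^ (-s₁ + (k : ℂ) / 2 - 1) * (p.2 : ℂ) ^ (-s₂ + (k : ℂ) / 2 - 1) /
          (1 + I * p.1 + I * p.2) ^ k)
      (Set.Ioi 0 ×ˢ Set.Ioi 0) ∧
    (∫ p in Set.Ioi (0 : ℝ) ×ˢ Set.Ioi (0 : ℝ),
        (p.1 : ℂ) ^ (-s₁ + (k : ℂ) / 2 - 1) * (p.2 : ℂ) ^ (-s₂ + (k : ℂ) / 2 - 1) /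
          (1 + I * p.1 + I * p.2) ^ k) =
      Complex.exp (π * I * (s₁ + s₂) / 2) / I ^ k *
        (Complex.Gamma (-s₁ + (k : ℂ) / 2) * Complex.Gamma (-s₂ + (k : ℂ) / 2) *
          Complex.Gamma (s₁ + s₂) / Complex.Gamma (k : ℂ)) := by
  set A : ℂ := -s₁ + (k : ℂ) / 2 with hA
  set B : ℂ := -s₂ + (k : ℂ) / 2 with hB
  have hs12 : (s₁ + s₂).re = s₁.re + s₂.re := by simp [Complex.add_re]
  have hAre : A.re = (k : ℝ) / 2 - s₁.re := by
    rw [hA, show -s₁ + (k:ℂ)/2 = (((k:ℝ)/2 : ℝ) : ℂ) - s₁ by push_cast; ring]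
    simp
  have hBre : B.re = (k : ℝ) / 2 - s₂.re := by
    rw [hB, show -s₂ + (k:ℂ)/2 = (((k:ℝ)/2 : ℝ) : ℂ) - s₂ by push_cast; ring]
    simp
  have hA0 : 0 < A.re := by rw [hAre]; linarith
  have hB0 : 0 < B.re := by rw [hBre]; linarith
  have hkre : ((k:ℂ)).re = (k:ℝ) := by simp
  have hBk : B.re < ((k:ℂ)).re := by rw [hBre, hkre]; linarith
  have hAkB : A.re < ((k:ℂ) - B).re := by
    rw [Complex.sub_re, hAre, hBre, hkre]; linarith
  -- denominator facts
  have hden_re : ∀ x y : ℝ, (1 + I * (x:ℂ) + I * (y:ℂ)).re = 1 := by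
    intro x y; simp
  have hden_im : ∀ x y : ℝ, (1 + I * (x:ℂ) + I * (y:ℂ)).im = x + y := by
    intro x y; simp
  have hden_ne : ∀ x y : ℝ, (1 + I * (x:ℂ) + I * (y:ℂ)) ≠ 0 := by
    intro x y h
    have := congrArg Complex.re h
    rw [hden_re] at this
    simp at this
  -- continuity of the integrand on the product set
  have hfcont : ContinuousOn
      (fun p : ℝ × ℝ => (p.1 : ℂ) ^ (A - 1) * (p.2 : ℂ) ^ (B - 1) /
        (1 + I * p.1 + I * p.2) ^ k) (Ioi 0 ×ˢ Ioi 0) := by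
    intro p hp
    have hp1 : (0:ℝ) < p.1 := hp.1
    have hp2 : (0:ℝ) < p.2 := hp.2
    have hs1 : ((p.1 : ℝ) : ℂ) ∈ Complex.slitPlane := by left; simpa using hp1
    have hs2 : ((p.2 : ℝ) : ℂ) ∈ Complex.slitPlane := by left; simpa using hp2
    have c1 : ContinuousAt (fun q : ℝ × ℝ => ((q.1 : ℂ)) ^ (A - 1)) p :=
      ((Complex.continuous_ofReal.comp continuous_fst).continuousAt).cpow
        continuousAt_const hs1
    have c2 : ContinuousAt (fun q : ℝ × ℝ => ((q.2 : ℂ)) ^ (B - 1)) p :=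
      ((Complex.continuous_ofReal.comp continuous_snd).continuousAt).cpow
        continuousAt_const hs2
    have c3 : ContinuousAt (fun q : ℝ × ℝ => (1 + I * (q.1:ℂ) + I * (q.2:ℂ)) ^ k) p := by
      apply ContinuousAt.pow
      exact (continuousAt_const.add (continuousAt_const.mul
        ((Complex.continuous_ofReal.comp continuous_fst).continuousAt))).add
        (continuousAt_const.mul ((Complex.continuous_ofReal.comp continuous_snd).continuousAt))
    exact ((c1.mul c2).div c3 (pow_ne_zero _ (hden_ne p.1 p.2))).continuousWithinAt
  -- the comparison bound
  set α : ℝ := A.re + (s₁ + s₂).re / 2 with hα_def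
  set β : ℝ := B.re + (s₁ + s₂).re / 2 with hβ_def
  have hαA : A.re < α := by rw [hα_def]; linarith
  have hβB : B.re < β := by rw [hβ_def]; linarith
  have hα0 : 0 ≤ α := by rw [hα_def]; linarith
  have hβ0 : 0 ≤ β := by rw [hβ_def]; linarith
  have hαβ : α + β = (k : ℝ) := by rw [hα_def, hβ_def, hAre, hBre, hs12]; ring
  have hbnd : ∀ p : ℝ × ℝ, p ∈ Ioi (0:ℝ) ×ˢ Ioi (0:ℝ) →
      ‖(p.1 : ℂ) ^ (A - 1) * (p.2 : ℂ) ^ (B - 1) / (1 + I * p.1 + I * p.2) ^ k‖ ≤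
        ((2:ℝ) ^ k * (p.1 ^ (A.re - 1) * (1 + p.1) ^ (-α))) *
          (p.2 ^ (B.re - 1) * (1 + p.2) ^ (-β)) := by
    intro p hp
    have hp1 : (0:ℝ) < p.1 := hp.1
    have hp2 : (0:ℝ) < p.2 := hp.2
    set az : ℝ := ‖(1 + I * (p.1:ℂ) + I * (p.2:ℂ))‖ with haz_def
    have h1 : (1:ℝ) ≤ az := by
      have h := Complex.re_le_norm (1 + I * (p.1:ℂ) + I * (p.2:ℂ))
      rw [hden_re] at h
      exact h
    have h2 : p.1 + p.2 ≤ az := by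
      have h := Complex.abs_im_le_norm (1 + I * (p.1:ℂ) + I * (p.2:ℂ))
      rw [hden_im] at h
      calc p.1 + p.2 ≤ |p.1 + p.2| := le_abs_self _
        _ ≤ az := h
    have h3 : 1 + p.1 + p.2 ≤ 2 * az := by linarith
    have hP1 : (0:ℝ) < (1 + p.1) ^ α := Real.rpow_pos_of_pos (by linarith) _
    have hP2 : (0:ℝ) < (1 + p.2) ^ β := Real.rpow_pos_of_pos (by linarith) _
    have hchain : (1 + p.1) ^ α * (1 + p.2) ^ β ≤ (2:ℝ) ^ k * az ^ k := by
      have e1 : (1 + p.1) ^ α ≤ (1 + p.1 + p.2) ^ α :=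
        Real.rpow_le_rpow (by linarith) (by linarith) hα0
      have e2 : (1 + p.2) ^ β ≤ (1 + p.1 + p.2) ^ β :=
        Real.rpow_le_rpow (by linarith) (by linarith) hβ0
      have e3 : (1 + p.1 + p.2) ^ α * (1 + p.1 + p.2) ^ β = (1 + p.1 + p.2) ^ ((k:ℝ)) := by
        rw [← Real.rpow_add (by linarith), hαβ]
      have e4 : (1 + p.1 + p.2) ^ ((k:ℝ)) ≤ (2 * az) ^ ((k:ℝ)) :=
        Real.rpow_le_rpow (by linarith) h3 (by positivity)
      have e5 : (2 * az) ^ ((k:ℝ)) = (2:ℝ) ^ k * az ^ k := by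
        rw [Real.mul_rpow (by norm_num) (by linarith), Real.rpow_natCast, Real.rpow_natCast]
      calc (1 + p.1) ^ α * (1 + p.2) ^ β
          ≤ (1 + p.1 + p.2) ^ α * (1 + p.1 + p.2) ^ β :=
            mul_le_mul e1 e2 (le_of_lt hP2) (Real.rpow_nonneg (by linarith) _)
        _ = (1 + p.1 + p.2) ^ ((k:ℝ)) := e3
        _ ≤ (2 * az) ^ ((k:ℝ)) := e4
        _ = (2:ℝ) ^ k * az ^ k := e5
    have hnorm : ‖(p.1 : ℂ) ^ (A - 1) * (p.2 : ℂ) ^ (B - 1) / (1 + I * p.1 + I * p.2) ^ k‖ =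
        p.1 ^ (A.re - 1) * p.2 ^ (B.re - 1) / az ^ k := by
      rw [norm_div, norm_mul, norm_pow, Complex.norm_cpow_eq_rpow_re_of_pos hp1,
        Complex.norm_cpow_eq_rpow_re_of_pos hp2, ← haz_def]
      norm_num
    rw [hnorm]
    have hN : (0:ℝ) ≤ p.1 ^ (A.re - 1) * p.2 ^ (B.re - 1) := by positivity
    have hden_pos : (0:ℝ) < (1 + p.1) ^ α * (1 + p.2) ^ β * ((2:ℝ) ^ k)⁻¹ := by positivity
    calc p.1 ^ (A.re - 1) * p.2 ^ (B.re - 1) / az ^ k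
        ≤ p.1 ^ (A.re - 1) * p.2 ^ (B.re - 1) /
            ((1 + p.1) ^ α * (1 + p.2) ^ β * ((2:ℝ) ^ k)⁻¹) := by
          apply div_le_div_of_nonneg_left hN ?_ ?_
          · positivity
          · rw [mul_inv_le_iff₀ (by positivity : (0:ℝ) < (2:ℝ)^k)]
            calc (1 + p.1) ^ α * (1 + p.2) ^ β ≤ (2:ℝ) ^ k * az ^ k := hchain
              _ = az ^ k * 2 ^ k := by ring
      _ = ((2:ℝ) ^ k * (p.1 ^ (A.re - 1) * (1 + p.1) ^ (-α))) *
            (p.2 ^ (B.re - 1) * (1 + p.2) ^ (-β)) := by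
          rw [Real.rpow_neg (by linarith : (0:ℝ) ≤ 1 + p.1),
            Real.rpow_neg (by linarith : (0:ℝ) ≤ 1 + p.2)]
          field_simp
  -- integrability on the product
  have hprod_meas : ((volume : Measure (ℝ × ℝ))).restrict (Ioi 0 ×ˢ Ioi 0)
      = (volume.restrict (Ioi (0:ℝ))).prod (volume.restrict (Ioi (0:ℝ))) := by
    rw [Measure.volume_eq_prod, Measure.prod_restrict]
  have hg_int : Integrable
      (fun p : ℝ × ℝ => ((2:ℝ) ^ k * (p.1 ^ (A.re - 1) * (1 + p.1) ^ (-α))) *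
        (p.2 ^ (B.re - 1) * (1 + p.2) ^ (-β)))
      ((volume.restrict (Ioi (0:ℝ))).prod (volume.restrict (Ioi (0:ℝ)))) :=
    ((intBeta hA0 hαA).const_mul _).mul_prod (intBeta hB0 hβB)
  have hmain_int : IntegrableOn
      (fun p : ℝ × ℝ => (p.1 : ℂ) ^ (A - 1) * (p.2 : ℂ) ^ (B - 1) /
        (1 + I * p.1 + I * p.2) ^ k) (Ioi 0 ×ˢ Ioi 0) := by
    rw [IntegrableOn, hprod_meas]
    apply Integrable.mono' hg_int
    · rw [← hprod_meas]
      exact hfcont.aestronglyMeasurable (measurableSet_Ioi.prod measurableSet_Ioi)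
    · rw [← hprod_meas, ae_restrict_iff' (measurableSet_Ioi.prod measurableSet_Ioi)]
      filter_upwards with p hp
      exact hbnd p hp
  refine ⟨hmain_int, ?_⟩
  -- evaluation
  have hnegI : (-I : ℂ) ∈ Complex.slitPlane := by right; simp
  have hIk : (I : ℂ) ^ k ≠ 0 := pow_ne_zero _ Complex.I_ne_zero
  have hinner : ∀ x : ℝ, x ∈ Ioi (0:ℝ) →
      (∫ y in Ioi (0:ℝ), (x:ℂ) ^ (A - 1) * (y:ℂ) ^ (B - 1) / (1 + I * x + I * y) ^ k)
      = ((I ^ k)⁻¹ * (Complex.Gamma B * Complex.Gamma ((k:ℂ) - B) / Complex.Gamma (k:ℂ))) *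
          ((x:ℂ) ^ (A - 1) * ((x:ℂ) - I) ^ (B - (k:ℂ))) := by
    intro x hx
    have hx0 : (0:ℝ) < x := hx
    have hws : ((x:ℂ) - I) ∈ Complex.slitPlane := by
      left; simpa using hx0
    have hpt : ∀ y ∈ Ioi (0:ℝ),
        (x:ℂ) ^ (A - 1) * (y:ℂ) ^ (B - 1) / (1 + I * x + I * y) ^ k
        = ((I ^ k)⁻¹ * (x:ℂ) ^ (A - 1)) * ((y:ℂ) ^ (B - 1) * ((y:ℂ) + ((x:ℂ) - I)) ^ (-(k:ℂ))) := by
      intro y hy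
      have hfac : (1 + I * (x:ℂ) + I * (y:ℂ)) = I * ((y:ℂ) + ((x:ℂ) - I)) := by
        have h := Complex.I_mul_I
        linear_combination h
      rw [hfac, mul_pow, ← Complex.cpow_natCast ((y:ℂ) + ((x:ℂ) - I)) k,
        div_eq_mul_inv, mul_inv, Complex.cpow_neg]
      ring
    rw [setIntegral_congr_fun measurableSet_Ioi hpt, MeasureTheory.integral_const_mul,
      (master B (k:ℂ) hB0 hBk hws).2]
    ring
  rw [Measure.volume_eq_prod, setIntegral_prod _ (by rwa [IntegrableOn, Measure.volume_eq_prod] at hmain_int)]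
  rw [setIntegral_congr_fun measurableSet_Ioi (fun x hx => hinner x hx)]
  rw [MeasureTheory.integral_const_mul]
  have hplug : ∀ x ∈ Ioi (0:ℝ), (x:ℂ) ^ (A - 1) * ((x:ℂ) - I) ^ (B - (k:ℂ))
      = (x:ℂ) ^ (A - 1) * ((x:ℂ) + (-I)) ^ (-((k:ℂ) - B)) := by
    intro x hx
    rw [show ((x:ℂ) - I) = (x:ℂ) + -I from sub_eq_add_neg _ _,
      show B - (k:ℂ) = -((k:ℂ) - B) by ring]
  rw [setIntegral_congr_fun measurableSet_Ioi hplug, (master A ((k:ℂ) - B) hA0 hAkB hnegI).2]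
  have he1 : A - ((k:ℂ) - B) = -(s₁ + s₂) := by rw [hA, hB]; push_cast; ring
  have he2 : ((k:ℂ) - B) - A = s₁ + s₂ := by rw [hA, hB]; push_cast; ring
  rw [he1, he2]
  have he3 : (-I : ℂ) ^ (-(s₁ + s₂)) = Complex.exp (π * I * (s₁ + s₂) / 2) := by
    rw [Complex.cpow_def_of_ne_zero (by simpa using Complex.I_ne_zero : (-I : ℂ) ≠ 0),
      Complex.log_neg_I]
    congr 1
    ring
  rw [he3]
  have hΓkB : Complex.Gamma ((k:ℂ) - B) ≠ 0 :=
    Complex.Gamma_ne_zero_of_re_pos (by rw [Complex.sub_re, hkre]; linarith [hBk, hkre])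
  have hΓk : Complex.Gamma ((k:ℂ)) ≠ 0 :=
    Complex.Gamma_ne_zero_of_re_pos (by rw [hkre]; positivity)
  field_simp
end

section
/- Let z₀ be a complex number with Re(z₀) > 0 and z₀ ∉ (−∞,0], and let μ, ν be complex with 0 < Re(μ) < Re(ν). Then ∫₀^∞ y^{μ−1} / (z₀ y + 1)^ν dy = z₀^{−μ} · B(μ, ν−μ), where B is the Beta function and z₀^{−μ} uses the principal branch. -/
open Complex Real MeasureTheory Set Filter Topology

lemma RB.integrableOn_rpow_mul_exp_neg_mul {a r : ℝ} (ha : -1 < a) (hr : 0 < r) :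
    IntegrableOn (fun t : ℝ => t ^ a * Real.exp (-(r * t))) (Ioi (0:ℝ)) := by
  have h : IntegrableOn (fun x : ℝ => Real.exp (-x) * x ^ a) (Ioi (0:ℝ)) := by
    simpa using Real.GammaIntegral_convergent (by linarith : (0:ℝ) < a + 1)
  have h2 : IntegrableOn (fun t : ℝ => Real.exp (-(r * t)) * (r * t) ^ a) (Ioi (0:ℝ)) := by
    have := (integrableOn_Ioi_comp_mul_left_iff (fun x : ℝ => Real.exp (-x) * x ^ a) 0 hr).mpr
      (by simpa using h)
    simpa using this
  have h3 : IntegrableOn (fun t : ℝ => r ^ (-a) * (Real.exp (-(r * t)) * (r * t) ^ a)) (Ioi (0:ℝ)) := h2.const_mul (r ^ (-a))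
  refine h3.congr_fun (fun t ht => ?_) measurableSet_Ioi
  have ht' : (0:ℝ) < t := ht
  dsimp only
  rw [Real.mul_rpow hr.le ht'.le]
  rw [show r ^ (-a) * (Real.exp (-(r * t)) * (r ^ a * t ^ a))
      = (r ^ (-a) * r ^ a) * (t ^ a * Real.exp (-(r * t))) by ring,
    ← Real.rpow_add hr, neg_add_cancel, Real.rpow_zero, one_mul]

lemma RB.norm_aux (s z : ℂ) {t : ℝ} (ht : 0 < t) :
    ‖(t:ℂ) ^ (s-1) * Complex.exp (-(z * t))‖ = t ^ (s.re - 1) * Real.exp (-(z.re * t)) := by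
  rw [norm_mul, Complex.norm_exp,
    Complex.norm_cpow_eq_rpow_re_of_pos ht]
  congr 2 <;> simp [Complex.mul_re]

lemma RB.meas_aux (s z : ℂ) : AEStronglyMeasurable
    (fun t : ℝ => (t:ℂ) ^ (s-1) * Complex.exp (-(z * t))) (volume.restrict (Ioi 0)) := by
  apply Measurable.aestronglyMeasurable
  exact (Complex.measurable_ofReal.pow measurable_const).mul
    (Complex.measurable_exp.comp ((measurable_const.mul Complex.measurable_ofReal).neg))

lemma RB.intA {z s : ℂ} (hz : 0 < z.re) (hs : 0 < s.re) :
    IntegrableOn (fun t : ℝ => (t:ℂ) ^ (s-1) * Complex.exp (-(z * t))) (Ioi (0:ℝ)) := by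
  refine (RB.integrableOn_rpow_mul_exp_neg_mul (by linarith : (-1:ℝ) < s.re - 1) hz).mono'
    (RB.meas_aux s z) ?_
  refine (ae_restrict_iff' measurableSet_Ioi).2 (ae_of_all _ fun t ht => ?_)
  exact le_of_eq (RB.norm_aux s z ht)

lemma RB.hasDeriv {s : ℂ} (hs : 0 < s.re) {z : ℂ} (hz : 0 < z.re) :
    DifferentiableAt ℂ (fun w : ℂ => ∫ t in Ioi (0:ℝ), (t:ℂ) ^ (s-1) * Complex.exp (-(w * t))) z := by
  set ε := z.re / 2 with hε_def
  have hε : 0 < ε := by positivity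
  have key := hasDerivAt_integral_of_dominated_loc_of_deriv_le (μ := volume.restrict (Ioi 0))
    (F := fun (w : ℂ) (t : ℝ) => (t:ℂ) ^ (s-1) * Complex.exp (-(w * t)))
    (F' := fun (w : ℂ) (t : ℝ) => (t:ℂ) ^ (s-1) * (Complex.exp (-(w * t)) * (-(t:ℂ))))
    (bound := fun t : ℝ => t ^ s.re * Real.exp (-(ε * t))) (x₀ := z) (Metric.ball_mem_nhds z hε)
    (Eventually.of_forall fun w => RB.meas_aux s w) (RB.intA hz hs) ?_ ?_ ?_ ?_
  · exact key.2.differentiableAt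
  · apply Measurable.aestronglyMeasurable
    exact (Complex.measurable_ofReal.pow measurable_const).mul
      ((Complex.measurable_exp.comp ((measurable_const.mul Complex.measurable_ofReal).neg)).mul
        Complex.measurable_ofReal.neg)
  · refine (ae_restrict_iff' measurableSet_Ioi).2 (ae_of_all _ fun t ht => fun w hw => ?_)
    have ht' : (0:ℝ) < t := ht
    have hwre : ε ≤ w.re := by
      have h1 : |w.re - z.re| ≤ ‖w - z‖ := by
        simpa using Complex.abs_re_le_norm (w - z)
      have h2 : ‖w - z‖ < ε := by
        simpa [Complex.dist_eq] using Metric.mem_ball.mp hw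
      have := abs_sub_lt_iff.mp (lt_of_le_of_lt h1 h2)
      simp only [hε_def] at *
      linarith [this.2]
    have hnorm : ‖(t:ℂ) ^ (s-1) * (Complex.exp (-(w * t)) * (-(t:ℂ)))‖
        = t ^ (s.re - 1) * Real.exp (-(w.re * t)) * t := by
      rw [norm_mul, norm_mul]
      rw [show ‖(t:ℂ) ^ (s-1)‖ * (‖Complex.exp (-(w*t))‖ * ‖-(t:ℂ)‖)
          = ‖(t:ℂ) ^ (s-1) * Complex.exp (-(w*t))‖ * ‖-(t:ℂ)‖ by rw [norm_mul]; ring]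
      rw [RB.norm_aux s w ht']
      simp [abs_of_pos ht']
    rw [hnorm]
    have h1 : t ^ (s.re - 1) * t = t ^ s.re := by
      nth_rewrite 2 [← Real.rpow_one t]
      rw [← Real.rpow_add ht']
      norm_num
    calc t ^ (s.re - 1) * Real.exp (-(w.re * t)) * t
        = t ^ s.re * Real.exp (-(w.re * t)) := by rw [mul_right_comm, h1]
      _ ≤ t ^ s.re * Real.exp (-(ε * t)) := by
          apply mul_le_mul_of_nonneg_left _ (Real.rpow_nonneg ht'.le _)
          apply Real.exp_le_exp.mpr
          simp only [neg_le_neg_iff]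
          exact mul_le_mul_of_nonneg_right hwre ht'.le
  · exact RB.integrableOn_rpow_mul_exp_neg_mul (by linarith : (-1:ℝ) < s.re) hε
  · refine ae_of_all _ fun t => fun w hw => ?_
    have h1 : HasDerivAt (fun w : ℂ => -(w * (t:ℂ))) (-(t:ℂ)) w :=
      (hasDerivAt_mul_const (t:ℂ)).neg
    exact (h1.cexp).const_mul _

lemma RB.rotGamma {s : ℂ} (hs : 0 < s.re) {z : ℂ} (hz : 0 < z.re) :
    (∫ t in Ioi (0:ℝ), (t:ℂ) ^ (s-1) * Complex.exp (-(z * t))) = z ^ (-s) * Complex.Gamma s := by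
  set U : Set ℂ := {w : ℂ | 0 < w.re} with hU_def
  have hUopen : IsOpen U := isOpen_lt continuous_const Complex.continuous_re
  set f : ℂ → ℂ := fun w => ∫ t in Ioi (0:ℝ), (t:ℂ) ^ (s-1) * Complex.exp (-(w * t)) with hf_def
  set g : ℂ → ℂ := fun w => w ^ (-s) * Complex.Gamma s with hg_def
  have hfa : AnalyticOnNhd ℂ f U := by
    apply DifferentiableOn.analyticOnNhd _ hUopen
    exact fun w hw => (RB.hasDeriv hs hw).differentiableWithinAt
  have hga : AnalyticOnNhd ℂ g U := by
    apply DifferentiableOn.analyticOnNhd _ hUopen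
    intro w hw
    refine DifferentiableAt.differentiableWithinAt ?_
    exact (differentiableAt_id.cpow (differentiableAt_const _) (Or.inl hw)).mul_const _
  have hreal : ∀ r : ℝ, 0 < r → f r = g r := by
    intro r hr
    have := Complex.integral_cpow_mul_exp_neg_mul_Ioi hs hr
    rw [hf_def, hg_def]
    simp only
    rw [this, one_div, Complex.inv_cpow, ← Complex.cpow_neg]
    rw [Complex.arg_ofReal_of_nonneg hr.le]
    exact Real.pi_ne_zero.symm
  have hseq : Tendsto (fun n : ℕ => ((1 + ((n:ℝ)+1)⁻¹ : ℝ) : ℂ)) atTop (𝓝[≠] (1:ℂ)) := by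
    apply tendsto_nhdsWithin_of_tendsto_nhds_of_eventually_within
    · have hR : Tendsto (fun n : ℕ => (1 + ((n:ℝ)+1)⁻¹ : ℝ)) atTop (𝓝 1) := by
        have := tendsto_one_div_add_atTop_nhds_zero_nat (𝕜 := ℝ)
        simp only [one_div] at this
        simpa using tendsto_const_nhds.add this
      have h := (Complex.continuous_ofReal.tendsto (1:ℝ)).comp hR
      rw [show ((1:ℝ):ℂ) = (1:ℂ) by norm_num] at h
      exact h
    · refine Eventually.of_forall fun n => ?_
      have h1 : (1:ℝ) < 1 + ((n:ℝ)+1)⁻¹ := by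
        have : (0:ℝ) < ((n:ℝ)+1)⁻¹ := by positivity
        linarith
      simp only [mem_compl_iff, mem_singleton_iff]
      intro h
      rw [show (1:ℂ) = ((1:ℝ):ℂ) by norm_num] at h
      exact absurd (Complex.ofReal_injective h) (ne_of_gt h1)
  have hfreq : ∃ᶠ w in 𝓝[≠] (1:ℂ), f w = g w :=
    hseq.frequently (Frequently.of_forall fun n => hreal _ (by positivity))
  have heq : EqOn f g U :=
    hfa.eqOn_of_preconnected_of_frequently_eq hga (convex_halfSpace_re_gt 0).isPreconnected
      (by simp [hU_def] : (1:ℂ) ∈ U) hfreq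
  exact heq hz

lemma RB.cpow_mul_ofReal {z : ℂ} (hz : z ≠ 0) {r : ℝ} (hr : 0 < r) (w : ℂ) :
    (z * (r:ℂ)) ^ w = z ^ w * (r:ℂ) ^ w := by
  have hr' : ((r:ℂ)) ≠ 0 := Complex.ofReal_ne_zero.mpr hr.ne'
  rw [mul_comm z (r:ℂ), Complex.cpow_def_of_ne_zero (mul_ne_zero hr' hz),
    Complex.log_ofReal_mul hr hz, Complex.cpow_def_of_ne_zero hz,
    Complex.cpow_def_of_ne_zero hr', add_mul, Complex.exp_add,
    Complex.ofReal_log hr.le]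
  ring

lemma RB.intL3 {a b r : ℝ} (ha : 0 < a) (hab : a < b) (hr : 0 < r) :
    IntegrableOn (fun y : ℝ => y ^ (a-1) * (r * y + 1) ^ (-b)) (Ioi (0:ℝ)) := by
  have hmeas : AEStronglyMeasurable (fun y : ℝ => y ^ (a-1) * (r * y + 1) ^ (-b))
      (volume.restrict (Ioi (0:ℝ))) := by
    apply Measurable.aestronglyMeasurable
    exact (measurable_id.pow_const _).mul
      (((measurable_const.mul measurable_id).add measurable_const).pow_const _)
  have hb : 0 < b := ha.trans hab
  rw [show Ioi (0:ℝ) = Ioc 0 1 ∪ Ioi 1 from (Ioc_union_Ioi_eq_Ioi zero_le_one).symm]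
  apply IntegrableOn.union
  · -- on Ioc 0 1 : bound by y ^ (a-1)
    have hint : IntegrableOn (fun y : ℝ => y ^ (a-1)) (Ioc (0:ℝ) 1) := by
      have := intervalIntegral.intervalIntegrable_rpow' (by linarith : (-1:ℝ) < a - 1) (a := 0) (b := 1)
      rwa [intervalIntegrable_iff_integrableOn_Ioc_of_le zero_le_one] at this
    refine hint.mono' (hmeas.mono_set Ioc_subset_Ioi_self) ?_
    refine (ae_restrict_iff' measurableSet_Ioc).2 (ae_of_all _ fun y hy => ?_)
    have hy0 : (0:ℝ) < y := hy.1
    have hbase : (0:ℝ) < r * y + 1 := by positivity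
    rw [Real.norm_eq_abs, abs_mul, _root_.abs_of_nonneg (Real.rpow_nonneg hy0.le _),
      _root_.abs_of_nonneg (Real.rpow_nonneg hbase.le _)]
    have h1 : (r * y + 1) ^ (-b) ≤ 1 := by
      apply Real.rpow_le_one_of_one_le_of_nonpos _ (by linarith)
      nlinarith
    nlinarith [Real.rpow_nonneg hy0.le (a-1), Real.rpow_nonneg hbase.le (-b)]
  · -- on Ioi 1 : bound by r^(-b) * y^(a-1-b)
    have hint : IntegrableOn (fun y : ℝ => r ^ (-b) * y ^ (a-1-b)) (Ioi (1:ℝ)) :=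
      (integrableOn_Ioi_rpow_of_lt (by linarith : a-1-b < -1) one_pos).const_mul _
    refine hint.mono' (hmeas.mono_set (Ioi_subset_Ioi zero_le_one)) ?_
    refine (ae_restrict_iff' measurableSet_Ioi).2 (ae_of_all _ fun y hy => ?_)
    have hy1 : (1:ℝ) < y := hy
    have hy0 : (0:ℝ) < y := by linarith
    have hbase : (0:ℝ) < r * y + 1 := by positivity
    have hry : (0:ℝ) < r * y := by positivity
    rw [Real.norm_eq_abs, abs_mul, _root_.abs_of_nonneg (Real.rpow_nonneg hy0.le _),
      _root_.abs_of_nonneg (Real.rpow_nonneg hbase.le _)]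
    have h1 : (r * y + 1) ^ (-b) ≤ (r * y) ^ (-b) := by
      rw [Real.rpow_neg hbase.le, Real.rpow_neg hry.le]
      apply inv_anti₀ (Real.rpow_pos_of_pos hry _)
      exact Real.rpow_le_rpow hry.le (by linarith) hb.le
    have h2 : (r * y) ^ (-b) = r ^ (-b) * y ^ (-b) := Real.mul_rpow hr.le hy0.le
    calc y ^ (a-1) * (r * y + 1) ^ (-b) ≤ y ^ (a-1) * (r ^ (-b) * y ^ (-b)) := by
          rw [← h2]; exact mul_le_mul_of_nonneg_left h1 (Real.rpow_nonneg hy0.le _)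
      _ = r ^ (-b) * y ^ (a-1-b) := by
          rw [show a-1-b = (a-1) + (-b) by ring, Real.rpow_add hy0]; ring

noncomputable def RBF (z₀ μ ν : ℂ) (y s : ℝ) : ℂ :=
  (y:ℂ) ^ (μ-1) * ((s:ℂ) ^ (ν-1) * Complex.exp (-((z₀ * y + 1) * s)))

lemma RBF_def (z₀ μ ν : ℂ) (y s : ℝ) :
    RBF z₀ μ ν y s = (y:ℂ) ^ (μ-1) * ((s:ℂ) ^ (ν-1) * Complex.exp (-((z₀ * y + 1) * s))) := rfl


/-- For `Re z₀ > 0` (in particular `z₀ ∉ (−∞,0]`) and `0 < Re μ < Re ν`: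
`∫₀^∞ y^{μ−1}/(z₀y+1)^ν dy = z₀^{−μ} B(μ, ν−μ)`. -/
theorem rotated_beta_integral (z₀ μ ν : ℂ) (hz₀ : 0 < z₀.re)
    (hz₀' : z₀ ∈ Complex.slitPlane) (hμ : 0 < μ.re) (hμν : μ.re < ν.re) :
    (∫ y in Set.Ioi (0 : ℝ), (y : ℂ) ^ (μ - 1) / (z₀ * y + 1) ^ ν) =
      z₀ ^ (-μ) * (Complex.Gamma μ * Complex.Gamma (ν - μ) / Complex.Gamma ν) := by
  have hν : 0 < ν.re := hμ.trans hμν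
  have hz₀ne : z₀ ≠ 0 := fun h => by rw [h] at hz₀; simp at hz₀
  have hΓν : Complex.Gamma ν ≠ 0 := by
    apply Complex.Gamma_ne_zero
    intro m h
    rw [h] at hν
    simp only [Complex.neg_re, Complex.natCast_re] at hν
    have : (0:ℝ) ≤ m := Nat.cast_nonneg m
    linarith
  have hre : ∀ y : ℝ, 0 < y → 0 < (z₀ * (y:ℂ) + 1).re := by
    intro y hy
    have : (z₀ * (y:ℂ) + 1).re = z₀.re * y + 1 := by
      simp [Complex.add_re, Complex.mul_re]
    rw [this]; positivity
  -- step 1 : rewrite the integrand using the rotated Gamma integral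
  have step1 : ∀ y ∈ Ioi (0:ℝ), (y:ℂ) ^ (μ-1) / (z₀ * y + 1) ^ ν
      = (Complex.Gamma ν)⁻¹ * ∫ s in Ioi (0:ℝ), RBF z₀ μ ν y s := by
    intro y hy
    have hinner : (∫ s in Ioi (0:ℝ), RBF z₀ μ ν y s)
        = (y:ℂ) ^ (μ-1) * ((z₀ * y + 1) ^ (-ν) * Complex.Gamma ν) := by
      simp only [RBF_def]
      rw [MeasureTheory.integral_const_mul, RB.rotGamma hν (hre y hy)]
    rw [hinner, Complex.cpow_neg]
    field_simp
  rw [setIntegral_congr_fun measurableSet_Ioi step1, MeasureTheory.integral_const_mul]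
  -- integrability on the product
  have hFmeas : AEStronglyMeasurable (Function.uncurry (RBF z₀ μ ν))
      (((volume.restrict (Ioi (0:ℝ))).prod (volume.restrict (Ioi (0:ℝ))))) := by
    apply Measurable.aestronglyMeasurable
    apply Measurable.mul
    · exact (Complex.measurable_ofReal.comp measurable_fst).pow measurable_const
    · apply Measurable.mul
      · exact (Complex.measurable_ofReal.comp measurable_snd).pow measurable_const
      · exact Complex.measurable_exp.comp
          ((((measurable_const.mul (Complex.measurable_ofReal.comp measurable_fst)).add
            measurable_const).mul (Complex.measurable_ofReal.comp measurable_snd)).neg)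
  have hnorm : ∀ y : ℝ, 0 < y → ∀ s : ℝ, 0 < s →
      ‖RBF z₀ μ ν y s‖ = y ^ (μ.re-1) * (s ^ (ν.re-1) * Real.exp (-((z₀.re * y + 1) * s))) := by
    intro y hy s hs
    rw [RBF_def]
    simp only [norm_mul]
    rw [Complex.norm_cpow_eq_rpow_re_of_pos hy, Complex.norm_cpow_eq_rpow_re_of_pos hs,
      Complex.norm_exp,
      show (μ-1).re = μ.re - 1 by simp,
      show (ν-1).re = ν.re - 1 by simp,
      show (-((z₀ * (y:ℂ) + 1) * (s:ℂ))).re = -((z₀.re * y + 1) * s) by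
        simp [Complex.mul_re, Complex.add_re]]
  have hInt : Integrable (Function.uncurry (RBF z₀ μ ν))
      (((volume.restrict (Ioi (0:ℝ))).prod (volume.restrict (Ioi (0:ℝ))))) := by
    rw [MeasureTheory.integrable_prod_iff hFmeas]
    constructor
    · filter_upwards [ae_restrict_mem measurableSet_Ioi] with y hy
      have : IntegrableOn (fun s : ℝ => (y:ℂ) ^ (μ-1) *
          ((s:ℂ) ^ (ν-1) * Complex.exp (-((z₀ * y + 1) * s)))) (Ioi (0:ℝ)) :=
        (RB.intA (hre y hy) hν).const_mul _
      exact this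
    · -- integral of the norm in s
      have heq : ∀ y ∈ Ioi (0:ℝ), (∫ s in Ioi (0:ℝ), ‖RBF z₀ μ ν y s‖)
          = Real.Gamma ν.re * (y ^ (μ.re-1) * (z₀.re * y + 1) ^ (-ν.re)) := by
        intro y hy
        have hy' : (0:ℝ) < y := hy
        have hpos : (0:ℝ) < z₀.re * y + 1 := by positivity
        rw [setIntegral_congr_fun measurableSet_Ioi (fun s hs => hnorm y hy' s hs),
          MeasureTheory.integral_const_mul,
          integral_rpow_mul_exp_neg_mul_Ioi hν hpos]
        rw [one_div, ← Real.rpow_neg_one, ← Real.rpow_mul hpos.le]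
        ring_nf
      refine ((RB.intL3 hμ hμν hz₀).const_mul (Real.Gamma ν.re)).congr ?_
      refine ((ae_restrict_iff' measurableSet_Ioi).2 (ae_of_all _ fun y hy => ?_))
      simp only [Function.uncurry_apply_pair]
      rw [heq y hy]
  -- swap the order of integration
  rw [MeasureTheory.integral_integral_swap hInt]
  -- evaluate the inner integral
  have step2 : ∀ s ∈ Ioi (0:ℝ), (∫ y in Ioi (0:ℝ), RBF z₀ μ ν y s)
      = (Complex.Gamma μ * z₀ ^ (-μ)) * ((s:ℂ) ^ (ν-μ-1) * Complex.exp (-(s:ℂ))) := by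
    intro s hs
    have hs' : (0:ℝ) < s := hs
    have hsne : ((s:ℝ):ℂ) ≠ 0 := Complex.ofReal_ne_zero.mpr hs'.ne'
    have h1 : ∀ y : ℝ, RBF z₀ μ ν y s
        = ((s:ℂ) ^ (ν-1) * Complex.exp (-(s:ℂ))) * ((y:ℂ) ^ (μ-1) * Complex.exp (-((z₀ * s) * y))) := by
      intro y
      rw [RBF_def]
      rw [show -((z₀ * (y:ℂ) + 1) * (s:ℂ)) = -((s:ℂ)) + -((z₀ * (s:ℂ)) * (y:ℂ)) by ring,
        Complex.exp_add]
      ring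
    simp_rw [h1]
    rw [MeasureTheory.integral_const_mul]
    have hzs : 0 < (z₀ * (s:ℂ)).re := by
      have : (z₀ * (s:ℂ)).re = z₀.re * s := by simp [Complex.mul_re]
      rw [this]; positivity
    rw [RB.rotGamma hμ hzs, RB.cpow_mul_ofReal hz₀ne hs' (-μ)]
    have hcomb : (s:ℂ) ^ (ν-1) * (s:ℂ) ^ (-μ) = (s:ℂ) ^ (ν-μ-1) := by
      rw [← Complex.cpow_add _ _ hsne]
      ring_nf
    calc ((s:ℂ) ^ (ν-1) * Complex.exp (-(s:ℂ))) * (z₀ ^ (-μ) * (s:ℂ) ^ (-μ) * Complex.Gamma μ)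
        = (Complex.Gamma μ * z₀ ^ (-μ)) * (((s:ℂ) ^ (ν-1) * (s:ℂ) ^ (-μ)) * Complex.exp (-(s:ℂ))) := by
          ring
      _ = (Complex.Gamma μ * z₀ ^ (-μ)) * ((s:ℂ) ^ (ν-μ-1) * Complex.exp (-(s:ℂ))) := by
          rw [hcomb]
  rw [setIntegral_congr_fun measurableSet_Ioi step2, MeasureTheory.integral_const_mul]
  have hΓνμ : (∫ s in Ioi (0:ℝ), (s:ℂ) ^ (ν-μ-1) * Complex.exp (-(s:ℂ)))
      = Complex.Gamma (ν - μ) := by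
    rw [Complex.Gamma_eq_integral (by simp [Complex.sub_re]; linarith : 0 < (ν - μ).re)]
    refine setIntegral_congr_fun measurableSet_Ioi fun s hs => ?_
    rw [← Complex.ofReal_neg, Complex.ofReal_exp]
    ring
  rw [hΓνμ]
  field_simp
end

section
/- For real u > 0, α > 0 and complex λ, μ, ν with Re(μ) > 0 and Re(ν) > 0: ∫₀^u x^{ν−1} (x+α)^λ (u−x)^{μ−1} dx = α^λ u^{μ+ν−1} B(μ, ν) ₂F₁(−λ, ν; μ+ν; −u/α). -/
open Complex Real MeasureTheory Set

/-- The Beta function `B(a,b) = Γ(a)Γ(b)/Γ(a+b)`. -/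
noncomputable def cBeta (a b : ℂ) : ℂ :=
  Complex.Gamma a * Complex.Gamma b / Complex.Gamma (a + b)

/-- The Gauss hypergeometric function `₂F₁(a,b;c;z)`, via the Euler integral
representation (valid for `Re c > Re b > 0`, `z ∉ [1,∞)`), which provides the
analytic continuation beyond the unit disc. -/
noncomputable def hyp2F1 (a b c z : ℂ) : ℂ :=
  (Complex.Gamma c / (Complex.Gamma b * Complex.Gamma (c - b))) *
    ∫ t in (0 : ℝ)..1, (t : ℂ) ^ (b - 1) * (1 - (t : ℂ)) ^ (c - b - 1) * (1 - z * t) ^ (-a)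

/-- Gradshteyn–Ryzhik 3.197(8): for real `u > 0`, `α > 0` and complex `λ, μ, ν` with
`Re μ > 0`, `Re ν > 0`:
`∫₀^u x^{ν−1}(x+α)^λ(u−x)^{μ−1} dx = α^λ u^{μ+ν−1} B(μ,ν) ₂F₁(−λ,ν;μ+ν;−u/α)`. -/
theorem GR_3_197_8 (u al : ℝ) (hu : 0 < u) (hal : 0 < al)
    (lam mu nu : ℂ) (hmu : 0 < mu.re) (hnu : 0 < nu.re) :
    (∫ x in (0 : ℝ)..u,
        (x : ℂ) ^ (nu - 1) * ((x : ℂ) + (al : ℂ)) ^ lam * ((u : ℂ) - (x : ℂ)) ^ (mu - 1)) =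
      (al : ℂ) ^ lam * (u : ℂ) ^ (mu + nu - 1) * cBeta mu nu *
        hyp2F1 (-lam) nu (mu + nu) (-(u : ℂ) / (al : ℂ)) := by
  have hu0 : (u : ℂ) ≠ 0 := by exact_mod_cast hu.ne'
  have hal0 : (al : ℂ) ≠ 0 := by exact_mod_cast hal.ne'
  set z : ℂ := -(u : ℂ) / (al : ℂ) with hz
  -- change of variables x = u t
  have key : (∫ x in (0 : ℝ)..u,
        (x : ℂ) ^ (nu - 1) * ((x : ℂ) + (al : ℂ)) ^ lam * ((u : ℂ) - (x : ℂ)) ^ (mu - 1))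
      = u • ∫ t in (0 : ℝ)..1,
        ((u * t : ℝ) : ℂ) ^ (nu - 1) * (((u * t : ℝ) : ℂ) + (al : ℂ)) ^ lam *
          ((u : ℂ) - ((u * t : ℝ) : ℂ)) ^ (mu - 1) := by
    rw [intervalIntegral.smul_integral_comp_mul_left
      (fun x : ℝ => (x : ℂ) ^ (nu - 1) * ((x : ℂ) + (al : ℂ)) ^ lam *
        ((u : ℂ) - (x : ℂ)) ^ (mu - 1)) u]
    norm_num
  rw [key]
  have congrI : (∫ t in (0 : ℝ)..1,
        ((u * t : ℝ) : ℂ) ^ (nu - 1) * (((u * t : ℝ) : ℂ) + (al : ℂ)) ^ lam *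
          ((u : ℂ) - ((u * t : ℝ) : ℂ)) ^ (mu - 1))
      = ∫ t in (0 : ℝ)..1,
        ((u : ℂ) ^ (nu - 1) * (u : ℂ) ^ (mu - 1) * (al : ℂ) ^ lam) *
          ((t : ℂ) ^ (nu - 1) * (1 - (t : ℂ)) ^ (mu - 1) * (1 - z * t) ^ lam) := by
    apply intervalIntegral.integral_congr
    intro t ht
    rw [Set.uIcc_of_le (by norm_num)] at ht
    obtain ⟨ht0, ht1⟩ := ht
    have h1 : ((u * t : ℝ) : ℂ) ^ (nu - 1) = (u : ℂ) ^ (nu - 1) * (t : ℂ) ^ (nu - 1) := by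
      rw [Complex.ofReal_mul]; exact Complex.mul_cpow_ofReal_nonneg hu.le ht0 _
    have h2 : ((u : ℂ) - ((u * t : ℝ) : ℂ)) ^ (mu - 1)
        = (u : ℂ) ^ (mu - 1) * (1 - (t : ℂ)) ^ (mu - 1) := by
      have : (u : ℂ) - ((u * t : ℝ) : ℂ) = (((u * (1 - t) : ℝ)) : ℂ) := by push_cast; ring
      rw [this, Complex.ofReal_mul, Complex.mul_cpow_ofReal_nonneg hu.le (by linarith)]
      push_cast; ring_nf
    have h3 : (((u * t : ℝ) : ℂ) + (al : ℂ)) ^ lam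
        = (al : ℂ) ^ lam * (1 - z * t) ^ lam := by
      have e1 : ((u * t : ℝ) : ℂ) + (al : ℂ) = (((al * (1 + u / al * t) : ℝ)) : ℂ) := by
        push_cast
        field_simp
        ring
      have e2 : ((1 + u / al * t : ℝ) : ℂ) = 1 - z * t := by
        rw [hz]; push_cast; field_simp; ring
      rw [e1, Complex.ofReal_mul, Complex.mul_cpow_ofReal_nonneg hal.le
        (by positivity : (0:ℝ) ≤ 1 + u / al * t), e2]
    simp only [h1, h2, h3]
    ring
  rw [congrI, intervalIntegral.integral_const_mul]
  -- Gamma cancellation and exponent algebra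
  have hcb : mu + nu - nu = mu := by ring
  have hne : -(-lam) = lam := by ring
  rw [hyp2F1, cBeta, hcb, hne]
  have hGmu : Complex.Gamma mu ≠ 0 := Complex.Gamma_ne_zero_of_re_pos hmu
  have hGnu : Complex.Gamma nu ≠ 0 := Complex.Gamma_ne_zero_of_re_pos hnu
  have hGmn : Complex.Gamma (mu + nu) ≠ 0 := by
    apply Complex.Gamma_ne_zero_of_re_pos
    rw [Complex.add_re]; linarith
  have hpow : (u : ℂ) * ((u : ℂ) ^ (nu - 1) * (u : ℂ) ^ (mu - 1))
      = (u : ℂ) ^ (mu + nu - 1) := by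
    rw [show mu + nu - 1 = 1 + ((nu - 1) + (mu - 1)) by ring,
      Complex.cpow_add _ _ hu0, Complex.cpow_add _ _ hu0, Complex.cpow_one]
  rw [Complex.real_smul, ← hpow]
  field_simp
  ring
  congr 1; congr 1; funext t; ring
end
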